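/- arXiv:1503.04314 — 7 statements merged into one kernel-verified Lean document; each statement's English description precedes it below -/
import Mathlib

section
/- Uniqueness of the representation (i) in Theorem 1: let λ, λ' ∈ ℂ with Im λ ≥ 0 and Im λ' ≥ 0, let d, d' ∈ ℝ, and let σ, σ' be nonzero finite Borel measures on ℝ with compact infinite supports. If for every z ∈ ℂ with Im z > 0 and z ∉ {λ, λ'} one has (z + d + ∫ dσ(t)/(t−z))/((z−λ)(z−conj λ)) = (z + d' + ∫ dσ'(t)/(t−z))/((z−λ')(z−conj λ')), then λ = λ', d = d', and σ = σ'. -/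
/-!
Put `N(z) = z + d + ∫ dσ(t)/(t - z)`; in the upper half-plane `Im N(z) ≥ Im z > 0`, and `N` is
continuous there. Cross-multiplying, `N(z)(z - λ')(z - conj λ') = N'(z)(z - λ)(z - conj λ)` on the
whole open upper half-plane. If `Im λ > 0`, evaluating at `z = λ` forces `λ = λ'`. If `λ ≠ λ'` are
both real, then along `z = λ + iε` the quotient `N(z)/(iε)` has real part `≥ 1`, whereas the
identity makes it tend to `-σ'({λ})/(λ - λ')² ≤ 0`.

Once `λ = λ'`, `N = N'` high up on the imaginary axis, and `y ↦ ∫ dσ(t)/(t - iy)` tends to `0`,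
so `d = d'` and the Cauchy transforms agree there. The relation
`∫ tᵏ⁺¹/(t - z) dσ = z ∫ tᵏ/(t - z) dσ + ∫ tᵏ dσ` then gives, by induction on `k`, that `σ` and
`σ'` have the same moments; compactly supported finite measures are determined by their moments
(Weierstrass approximation).
-/

open MeasureTheory Complex Filter

/-- Cauchy transform of a Borel measure on ℝ, at a point `z` (defined off the support). -/
noncomputable def cauchyT (σ : Measure ℝ) (z : ℂ) : ℂ := ∫ t, ((t : ℂ) - z)⁻¹ ∂σ

/-- Topological support of a Borel measure on ℝ. -/
def msupport (σ : Measure ℝ) : Set ℝ := {x | ∀ U ∈ nhds x, σ U ≠ 0}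

open Topology Set ComplexConjugate

lemma measure_compl_msupport (σ : Measure ℝ) : σ (msupport σ)ᶜ = 0 := by
  refine measure_null_of_locally_null _ fun x hx => ?_
  simp only [msupport, mem_compl_iff, mem_ofPred_eq, not_forall, not_not] at hx
  obtain ⟨U, hU, hU0⟩ := hx
  exact ⟨U, nhdsWithin_le_nhds hU, hU0⟩

lemma ae_abs_le_of_forall_mem_msupport {σ : Measure ℝ} {R : ℝ}
    (hR : ∀ x ∈ msupport σ, |x| ≤ R) : ∀ᵐ t ∂σ, |t| ≤ R :=
  ae_iff.2 <| measure_mono_null (fun t ht hmem => ht (hR t hmem)) (measure_compl_msupport σ)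

lemma integrable_of_continuous_of_ae_abs_le {E : Type*} [NormedAddCommGroup E]
    {σ : Measure ℝ} [IsFiniteMeasure σ] {f : ℝ → E} {R : ℝ} (hf : Continuous f)
    (hb : ∀ᵐ t ∂σ, |t| ≤ R) : Integrable f σ := by
  rw [← Measure.restrict_eq_self_of_ae_mem (hb.mono fun t ht => abs_le.1 ht)]
  exact hf.continuousOn.integrableOn_compact isCompact_Icc

lemma tendsto_zero_of_norm_le_div_im {f : ℂ → ℂ} {C : ℝ}
    (hf : ∀ z : ℂ, 0 < z.im → ‖f z‖ ≤ C / z.im) :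
    Tendsto (fun y : ℝ => f (y * I)) atTop (𝓝 0) := by
  refine squeeze_zero_norm' ?_ ((tendsto_const_nhds (x := C)).div_atTop tendsto_id)
  filter_upwards [eventually_gt_atTop 0] with y hy
  simpa using hf (y * I) (by simpa using hy)

section CauchyTransform

variable {σ : Measure ℝ} {z : ℂ}

lemma ofReal_sub_ne_zero_of_im_ne_zero (hz : z.im ≠ 0) (t : ℝ) : (t : ℂ) - z ≠ 0 := by
  intro h
  apply hz
  simpa using congrArg im h

lemma norm_inv_ofReal_sub_le (hz : 0 < z.im) (t : ℝ) : ‖((t : ℂ) - z)⁻¹‖ ≤ z.im⁻¹ := by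
  rw [norm_inv]
  refine inv_anti₀ hz ((le_abs_self _).trans ?_)
  simpa using abs_im_le_norm ((t : ℂ) - z)

lemma continuous_inv_ofReal_sub (hz : z.im ≠ 0) : Continuous fun t : ℝ => ((t : ℂ) - z)⁻¹ :=
  (continuous_ofReal.sub continuous_const).inv₀ (ofReal_sub_ne_zero_of_im_ne_zero hz)

lemma sub_conj_ne_zero {w : ℂ} (hz : 0 < z.im) (hw : 0 ≤ w.im) : z - conj w ≠ 0 := by
  intro h
  have := congrArg im h
  simp only [sub_im, conj_im, sub_neg_eq_add, zero_im] at this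
  linarith

variable [IsFiniteMeasure σ]

lemma integrable_inv_ofReal_sub (hz : 0 < z.im) :
    Integrable (fun t : ℝ => ((t : ℂ) - z)⁻¹) σ :=
  (integrable_const z.im⁻¹).mono' (continuous_inv_ofReal_sub hz.ne').aestronglyMeasurable
    (ae_of_all _ (norm_inv_ofReal_sub_le hz))

lemma norm_cauchyT_le (hz : 0 < z.im) : ‖cauchyT σ z‖ ≤ σ.real univ / z.im := by
  rw [div_eq_inv_mul]
  exact norm_integral_le_of_norm_le_const (ae_of_all _ (norm_inv_ofReal_sub_le hz))

lemma tendsto_cauchyT_atTop : Tendsto (fun y : ℝ => cauchyT σ (y * I)) atTop (𝓝 0) :=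
  tendsto_zero_of_norm_le_div_im fun _ => norm_cauchyT_le

lemma im_cauchyT_nonneg (hz : 0 < z.im) : 0 ≤ (cauchyT σ z).im := by
  have h := integral_im (μ := σ) (integrable_inv_ofReal_sub hz)
  simp only [RCLike.im_to_complex] at h
  rw [cauchyT, ← h]
  refine integral_nonneg fun t => ?_
  rw [inv_im]
  exact div_nonneg (by simpa using hz.le) (normSq_nonneg _)

lemma continuousAt_cauchyT (hz : 0 < z.im) : ContinuousAt (cauchyT σ) z := by
  have hnear : ∀ᶠ w in 𝓝 z, z.im / 2 < w.im :=
    continuous_im.continuousAt.eventually (lt_mem_nhds (half_lt_self hz))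
  refine continuousAt_of_dominated (bound := fun _ => (z.im / 2)⁻¹) ?_ ?_ (integrable_const _) ?_
  · filter_upwards [hnear] with w hw
    exact (continuous_inv_ofReal_sub (by linarith : (0 : ℝ) < w.im).ne').aestronglyMeasurable
  · filter_upwards [hnear] with w hw
    exact ae_of_all _ fun t => (norm_inv_ofReal_sub_le (by linarith) t).trans
      (inv_anti₀ (by linarith) hw.le)
  · exact ae_of_all _ fun t =>
      (continuousAt_const.sub continuousAt_id).inv₀ (ofReal_sub_ne_zero_of_im_ne_zero hz.ne' t)

lemma norm_mul_inv_ofReal_sub_le {ε : ℝ} (hε : 0 < ε) (x t : ℝ) :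
    ‖(ε * I : ℂ) * ((t : ℂ) - (x + ε * I))⁻¹‖ ≤ 1 := by
  have hle := norm_inv_ofReal_sub_le (z := x + ε * I) (by simpa using hε) t
  simp only [add_im, ofReal_im, mul_im, ofReal_re, I_im, mul_one, I_re, mul_zero, add_zero,
    zero_add] at hle
  rw [norm_mul, norm_mul, norm_I, norm_real, Real.norm_of_nonneg hε.le, mul_one]
  calc ε * ‖((t : ℂ) - (x + ε * I))⁻¹‖ ≤ ε * ε⁻¹ := by gcongr
    _ = 1 := mul_inv_cancel₀ hε.ne'

lemma tendsto_mul_inv_ofReal_sub (x t : ℝ) :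
    Tendsto (fun ε : ℝ => (ε * I : ℂ) * ((t : ℂ) - (x + ε * I))⁻¹) (𝓝[>] 0)
      (𝓝 (({x} : Set ℝ).indicator (fun _ => (-1 : ℂ)) t)) := by
  rcases eq_or_ne t x with rfl | htx
  · rw [indicator_of_mem (mem_singleton t)]
    refine tendsto_const_nhds.congr' (eventually_nhdsWithin_of_forall fun ε (hε : 0 < ε) => ?_)
    have : (ε * I : ℂ) ≠ 0 := by simp [hε.ne']
    dsimp only
    rw [sub_add_cancel_left, inv_neg, mul_neg, mul_inv_cancel₀ this]
  · rw [indicator_of_notMem (notMem_singleton_iff.2 htx)]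
    have hne : (t : ℂ) - x ≠ 0 := sub_ne_zero.2 (ofReal_injective.ne htx)
    have hcont : ContinuousAt (fun ε : ℝ => (ε * I : ℂ) * ((t : ℂ) - (x + ε * I))⁻¹) 0 :=
      by fun_prop (disch := simpa using hne)
    simpa using hcont.tendsto.mono_left nhdsWithin_le_nhds

lemma tendsto_mul_cauchyT_nhdsGT (x : ℝ) :
    Tendsto (fun ε : ℝ => (ε * I : ℂ) * cauchyT σ (x + ε * I)) (𝓝[>] 0)
      (𝓝 (-(σ.real {x} : ℂ))) := by
  have hlim : ∫ t, ({x} : Set ℝ).indicator (fun _ => (-1 : ℂ)) t ∂σ = -(σ.real {x} : ℂ) := by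
    rw [integral_indicator_const _ (measurableSet_singleton x)]
    simp
  simp_rw [cauchyT, ← integral_const_mul]
  rw [← hlim]
  refine tendsto_integral_filter_of_dominated_convergence (fun _ => 1) ?_ ?_ (integrable_const 1)
    (ae_of_all _ (tendsto_mul_inv_ofReal_sub x))
  · exact eventually_nhdsWithin_of_forall fun ε (hε : 0 < ε) =>
      (continuous_const.mul
        (continuous_inv_ofReal_sub (by simpa using hε.ne'))).aestronglyMeasurable
  · exact eventually_nhdsWithin_of_forall fun ε hε => ae_of_all _ (norm_mul_inv_ofReal_sub_le hε x)

end CauchyTransform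

section Moments

variable {σ σ' : Measure ℝ} [IsFiniteMeasure σ] [IsFiniteMeasure σ'] {R : ℝ} {z : ℂ}

noncomputable def cauchyTPow (σ : Measure ℝ) (k : ℕ) (z : ℂ) : ℂ :=
  ∫ t, (t : ℂ) ^ k * ((t : ℂ) - z)⁻¹ ∂σ

omit [IsFiniteMeasure σ] in
lemma cauchyTPow_zero : cauchyTPow σ 0 = cauchyT σ := by
  ext z
  simp [cauchyTPow, cauchyT]

lemma cauchyTPow_succ (hb : ∀ᵐ t ∂σ, |t| ≤ R) (hz : z.im ≠ 0) (k : ℕ) :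
    cauchyTPow σ (k + 1) z = z * cauchyTPow σ k z + ∫ t, t ^ k ∂σ := by
  have hpt : ∀ t : ℝ, (t : ℂ) ^ (k + 1) * ((t : ℂ) - z)⁻¹
      = z * ((t : ℂ) ^ k * ((t : ℂ) - z)⁻¹) + ((t ^ k : ℝ) : ℂ) := fun t => by
    have := ofReal_sub_ne_zero_of_im_ne_zero hz t
    push_cast
    field_simp
    ring
  simp_rw [cauchyTPow, hpt]
  rw [integral_add, integral_const_mul, integral_complex_ofReal]
  · exact (integrable_of_continuous_of_ae_abs_le
      ((continuous_ofReal.pow k).mul (continuous_inv_ofReal_sub hz)) hb).const_mul z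
  · exact integrable_of_continuous_of_ae_abs_le (by fun_prop) hb

lemma norm_cauchyTPow_le (hb : ∀ᵐ t ∂σ, |t| ≤ R) (hz : 0 < z.im) (k : ℕ) :
    ‖cauchyTPow σ k z‖ ≤ R ^ k * σ.real univ / z.im := by
  rw [div_eq_mul_inv, mul_right_comm]
  refine norm_integral_le_of_norm_le_const (hb.mono fun t ht => ?_)
  rw [norm_mul, norm_pow, norm_real, Real.norm_eq_abs]
  exact mul_le_mul (pow_le_pow_left₀ (abs_nonneg t) ht k) (norm_inv_ofReal_sub_le hz t)
    (norm_nonneg _) (pow_nonneg ((abs_nonneg t).trans ht) k)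

lemma tendsto_cauchyTPow_atTop (hb : ∀ᵐ t ∂σ, |t| ≤ R) (k : ℕ) :
    Tendsto (fun y : ℝ => cauchyTPow σ k (y * I)) atTop (𝓝 0) :=
  tendsto_zero_of_norm_le_div_im fun _ hz => norm_cauchyTPow_le hb hz k

lemma integral_pow_eq_of_cauchyTPow_eventuallyEq {R' : ℝ} (hb : ∀ᵐ t ∂σ, |t| ≤ R)
    (hb' : ∀ᵐ t ∂σ', |t| ≤ R') {k : ℕ}
    (h : ∀ᶠ y : ℝ in atTop, cauchyTPow σ k (y * I) = cauchyTPow σ' k (y * I)) :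
    ∫ t, t ^ k ∂σ = ∫ t, t ^ k ∂σ' := by
  have hdiff : ∀ᶠ y : ℝ in atTop, ((∫ t, t ^ k ∂σ : ℝ) : ℂ) - ((∫ t, t ^ k ∂σ' : ℝ) : ℂ)
      = cauchyTPow σ (k + 1) (y * I) - cauchyTPow σ' (k + 1) (y * I) := by
    filter_upwards [h, eventually_gt_atTop 0] with y hy hy0
    have hz : (y * I).im ≠ 0 := by simpa using hy0.ne'
    rw [cauchyTPow_succ hb hz, cauchyTPow_succ hb' hz, hy]
    ring
  have hlim := (tendsto_cauchyTPow_atTop hb (k + 1)).sub (tendsto_cauchyTPow_atTop hb' (k + 1))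
  rw [sub_zero] at hlim
  exact_mod_cast sub_eq_zero.1 (tendsto_nhds_unique (tendsto_const_nhds.congr' hdiff) hlim)

lemma cauchyTPow_eventuallyEq {R' : ℝ} (hb : ∀ᵐ t ∂σ, |t| ≤ R) (hb' : ∀ᵐ t ∂σ', |t| ≤ R')
    (hC : ∀ᶠ y : ℝ in atTop, cauchyT σ (y * I) = cauchyT σ' (y * I)) (k : ℕ) :
    ∀ᶠ y : ℝ in atTop, cauchyTPow σ k (y * I) = cauchyTPow σ' k (y * I) := by
  induction k with
  | zero => simpa only [cauchyTPow_zero] using hC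
  | succ k ih =>
    filter_upwards [ih, eventually_gt_atTop 0] with y hy hy0
    have hz : (y * I).im ≠ 0 := by simpa using hy0.ne'
    rw [cauchyTPow_succ hb hz, cauchyTPow_succ hb' hz, hy,
      integral_pow_eq_of_cauchyTPow_eventuallyEq hb hb' ih]

lemma integral_eval_eq_of_integral_pow_eq {R' : ℝ} (hb : ∀ᵐ t ∂σ, |t| ≤ R)
    (hb' : ∀ᵐ t ∂σ', |t| ≤ R') (hm : ∀ k : ℕ, ∫ t, t ^ k ∂σ = ∫ t, t ^ k ∂σ') (p : Polynomial ℝ) :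
    ∫ t, p.eval t ∂σ = ∫ t, p.eval t ∂σ' := by
  simp_rw [Polynomial.eval_eq_sum_range]
  rw [integral_finsetSum _ fun i _ => integrable_of_continuous_of_ae_abs_le (by fun_prop) hb,
    integral_finsetSum _ fun i _ => integrable_of_continuous_of_ae_abs_le (by fun_prop) hb']
  simp_rw [integral_const_mul, hm]

lemma abs_integral_sub_integral_eval_le {f : ℝ → ℝ} (hf : Continuous f) (hb : ∀ᵐ t ∂σ, |t| ≤ R)
    {p : Polynomial ℝ} {ε : ℝ} (hp : ∀ x ∈ Icc (-R) R, |p.eval x - f x| < ε) :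
    |∫ t, f t ∂σ - ∫ t, p.eval t ∂σ| ≤ ε * σ.real univ := by
  rw [← integral_sub (integrable_of_continuous_of_ae_abs_le (E := ℝ) hf hb)
    (integrable_of_continuous_of_ae_abs_le (E := ℝ) p.continuous hb), ← Real.norm_eq_abs]
  refine norm_integral_le_of_norm_le_const (hb.mono fun t ht => ?_)
  rw [Real.norm_eq_abs, abs_sub_comm]
  exact (hp t (abs_le.1 ht)).le

lemma ext_of_integral_pow_eq (hb : ∀ᵐ t ∂σ, |t| ≤ R) (hb' : ∀ᵐ t ∂σ', |t| ≤ R)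
    (hm : ∀ k : ℕ, ∫ t, t ^ k ∂σ = ∫ t, t ^ k ∂σ') : σ = σ' := by
  refine ext_of_forall_integral_eq_of_IsFiniteMeasure fun f => ?_
  have happrox : ∀ ε > 0, |∫ t, f t ∂σ - ∫ t, f t ∂σ'| ≤ ε * (σ.real univ + σ'.real univ) := by
    intro ε hε
    obtain ⟨p, hp⟩ :=
      exists_polynomial_near_of_continuousOn (-R) R f f.continuous.continuousOn ε hε
    have h := abs_integral_sub_integral_eval_le f.continuous hb hp
    have h' := abs_integral_sub_integral_eval_le f.continuous hb' hp
    rw [integral_eval_eq_of_integral_pow_eq hb hb' hm p] at h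
    rw [abs_sub_comm] at h'
    calc |∫ t, f t ∂σ - ∫ t, f t ∂σ'|
        ≤ |∫ t, f t ∂σ - ∫ t, p.eval t ∂σ'| + |∫ t, p.eval t ∂σ' - ∫ t, f t ∂σ'| :=
          abs_sub_le _ _ _
      _ ≤ ε * (σ.real univ + σ'.real univ) := by linarith
  have hlim : Tendsto (fun ε : ℝ => ε * (σ.real univ + σ'.real univ)) (𝓝[>] 0) (𝓝 0) :=
    ((continuous_mul_const _).tendsto' 0 0 (zero_mul _)).mono_left nhdsWithin_le_nhds
  exact sub_eq_zero.1 <| abs_nonpos_iff.1 <|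
    ge_of_tendsto hlim (eventually_nhdsWithin_of_forall happrox)

lemma ext_of_cauchyT_eventuallyEq (hc : IsCompact (msupport σ)) (hc' : IsCompact (msupport σ'))
    (hC : ∀ᶠ y : ℝ in atTop, cauchyT σ (y * I) = cauchyT σ' (y * I)) : σ = σ' := by
  obtain ⟨R, hR⟩ := isBounded_iff_forall_norm_le.1 (hc.union hc').isBounded
  have hb : ∀ᵐ t ∂σ, |t| ≤ R :=
    ae_abs_le_of_forall_mem_msupport fun x hx => hR x (mem_union_left _ hx)
  have hb' : ∀ᵐ t ∂σ', |t| ≤ R :=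
    ae_abs_le_of_forall_mem_msupport fun x hx => hR x (mem_union_right _ hx)
  exact ext_of_integral_pow_eq hb hb' fun k =>
    integral_pow_eq_of_cauchyTPow_eventuallyEq hb hb' (cauchyTPow_eventuallyEq hb hb' hC k)

end Moments

section Representation

variable {σ σ' : Measure ℝ} [IsFiniteMeasure σ] [IsFiniteMeasure σ'] {d d' : ℝ} {z lam lam' : ℂ}

noncomputable def shiftedCauchyT (σ : Measure ℝ) (d : ℝ) (z : ℂ) : ℂ := z + d + cauchyT σ z

lemma im_le_im_shiftedCauchyT (hz : 0 < z.im) : z.im ≤ (shiftedCauchyT σ d z).im := by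
  simpa [shiftedCauchyT] using im_cauchyT_nonneg (σ := σ) hz

lemma shiftedCauchyT_ne_zero (hz : 0 < z.im) : shiftedCauchyT σ d z ≠ 0 := fun h => by
  have := im_le_im_shiftedCauchyT (σ := σ) (d := d) hz
  rw [h, zero_im] at this
  linarith

lemma continuousAt_shiftedCauchyT (hz : 0 < z.im) : ContinuousAt (shiftedCauchyT σ d) z :=
  (continuousAt_id.add continuousAt_const).add (continuousAt_cauchyT hz)

lemma shiftedCauchyT_mul_eq (hlam : 0 ≤ lam.im) (hlam' : 0 ≤ lam'.im)
    (heq : ∀ z : ℂ, 0 < z.im → z ≠ lam → z ≠ lam' →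
      shiftedCauchyT σ d z / ((z - lam) * (z - conj lam)) =
      shiftedCauchyT σ' d' z / ((z - lam') * (z - conj lam')))
    (hz : 0 < z.im) :
    shiftedCauchyT σ d z * ((z - lam') * (z - conj lam')) =
      shiftedCauchyT σ' d' z * ((z - lam) * (z - conj lam)) := by
  have hcont : ∀ (τ : Measure ℝ) [IsFiniteMeasure τ] (e : ℝ) (μ : ℂ),
      ContinuousAt (fun w => shiftedCauchyT τ e w * ((w - μ) * (w - conj μ))) z :=
    fun τ _ e μ => (continuousAt_shiftedCauchyT hz).mul (by fun_prop)
  refine (((hcont σ d lam').eventuallyEq_nhds_iff_eventuallyEq_nhdsNE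
    (hcont σ' d' lam)).1 ?_).eq_of_nhds
  have hupper : ∀ᶠ w in 𝓝[≠] z, 0 < w.im :=
    eventually_nhdsWithin_of_eventually_nhds <|
      continuous_im.continuousAt.eventually (lt_mem_nhds hz)
  filter_upwards [hupper, (eventually_cofinite_ne lam).filter_mono (nhdsNE_le_cofinite z),
    (eventually_cofinite_ne lam').filter_mono (nhdsNE_le_cofinite z)] with w hw hw₁ hw₂
  exact (div_eq_div_iff (mul_ne_zero (sub_ne_zero.2 hw₁) (sub_conj_ne_zero hw hlam))
    (mul_ne_zero (sub_ne_zero.2 hw₂) (sub_conj_ne_zero hw hlam'))).1 (heq w hw hw₁ hw₂)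

omit [IsFiniteMeasure σ'] in
lemma eq_of_mul_eq_of_im_pos (hlam : 0 < lam.im) (hlam' : 0 ≤ lam'.im)
    (h : shiftedCauchyT σ d lam * ((lam - lam') * (lam - conj lam')) =
      shiftedCauchyT σ' d' lam * ((lam - lam) * (lam - conj lam))) :
    lam = lam' := by
  rw [sub_self, zero_mul, mul_zero] at h
  simpa [shiftedCauchyT_ne_zero hlam, sub_conj_ne_zero hlam hlam', sub_eq_zero] using h

lemma tendsto_add_mul_I_nhdsGT (z : ℂ) : Tendsto (fun ε : ℝ => z + ε * I) (𝓝[>] 0) (𝓝 z) :=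
  ((continuous_const.add (continuous_ofReal.mul continuous_const)).tendsto' 0 _
    (by simp)).mono_left nhdsWithin_le_nhds

lemma tendsto_mul_shiftedCauchyT_nhdsGT (x : ℝ) :
    Tendsto (fun ε : ℝ => ε * I * shiftedCauchyT σ d (x + ε * I)) (𝓝[>] 0)
      (𝓝 (-(σ.real {x} : ℂ))) := by
  have hεI : Tendsto (fun ε : ℝ => (ε * I : ℂ)) (𝓝[>] 0) (𝓝 0) := by
    simpa using tendsto_add_mul_I_nhdsGT 0
  simpa [shiftedCauchyT, mul_add] using
    (hεI.mul ((tendsto_add_mul_I_nhdsGT x).add_const (d : ℂ))).add (tendsto_mul_cauchyT_nhdsGT x)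

lemma one_le_re_shiftedCauchyT_div {ε : ℝ} (hε : 0 < ε) (x : ℝ) :
    1 ≤ (shiftedCauchyT σ d (x + ε * I) / (ε * I)).re := by
  have him := im_le_im_shiftedCauchyT (σ := σ) (d := d) (z := x + ε * I) (by simpa using hε)
  simp only [add_im, ofReal_im, mul_im, ofReal_re, I_im, mul_one, I_re, mul_zero, add_zero,
    zero_add] at him
  simp only [div_re, mul_re, ofReal_re, I_re, mul_zero, ofReal_im, I_im, mul_one, sub_zero,
    normSq_mul, normSq_ofReal, normSq_I, mul_im, zero_add, zero_div]
  rw [le_div_iff₀ (by positivity)]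
  nlinarith

lemma eq_of_mul_eq_ofReal {x x' : ℝ}
    (h : ∀ ε : ℝ, 0 < ε →
      shiftedCauchyT σ d (x + ε * I) * ((x + ε * I - x') * (x + ε * I - x')) =
      shiftedCauchyT σ' d' (x + ε * I) * ((x + ε * I - x) * (x + ε * I - x))) :
    x = x' := by
  by_contra hne
  set Φ : ℝ → ℂ := fun ε => shiftedCauchyT σ d (x + ε * I) / (ε * I)
  have hΦ : ∀ ε > 0, Φ ε = ε * I * shiftedCauchyT σ' d' (x + ε * I) / (x + ε * I - x') ^ 2 := by
    intro ε hε
    have h₁ : (ε * I : ℂ) ≠ 0 := by simp [hε.ne']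
    have h₂ : (x + ε * I - x' : ℂ) ≠ 0 := fun h => by
      have := congrArg im h
      simp only [sub_im, add_im, ofReal_im, mul_im, ofReal_re, I_im, mul_one, I_re, mul_zero,
        add_zero, zero_add, sub_zero, zero_im] at this
      exact hε.ne' this
    have := h ε hε
    rw [add_sub_cancel_left] at this
    rw [div_eq_div_iff h₁ (pow_ne_zero 2 h₂)]
    linear_combination this
  have hlim : Tendsto Φ (𝓝[>] 0) (𝓝 (-(σ'.real {x} : ℂ) / ((x : ℂ) - x') ^ 2)) :=
    ((tendsto_mul_shiftedCauchyT_nhdsGT x).div (((tendsto_add_mul_I_nhdsGT x).sub_const _).pow 2)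
      (pow_ne_zero 2 (sub_ne_zero.2 (ofReal_injective.ne hne)))).congr'
      (eventually_nhdsWithin_of_forall fun ε hε => (hΦ ε hε).symm)
  have hge : 1 ≤ (-(σ'.real {x} : ℂ) / ((x : ℂ) - x') ^ 2).re :=
    ge_of_tendsto ((continuous_re.tendsto _).comp hlim)
      (eventually_nhdsWithin_of_forall fun ε hε => one_le_re_shiftedCauchyT_div hε x)
  have hle : (-(σ'.real {x} : ℂ) / ((x : ℂ) - x') ^ 2).re ≤ 0 := by
    rw [← ofReal_sub, ← ofReal_pow, ← ofReal_neg, ← ofReal_div, ofReal_re]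
    exact div_nonpos_of_nonpos_of_nonneg (neg_nonpos.2 measureReal_nonneg) (sq_nonneg _)
  linarith

lemma eq_of_shiftedCauchyT_div_eq (hlam : 0 ≤ lam.im) (hlam' : 0 ≤ lam'.im)
    (heq : ∀ z : ℂ, 0 < z.im → z ≠ lam → z ≠ lam' →
      shiftedCauchyT σ d z / ((z - lam) * (z - conj lam)) =
      shiftedCauchyT σ' d' z / ((z - lam') * (z - conj lam'))) :
    lam = lam' := by
  have hmul := fun (z : ℂ) (hz : 0 < z.im) => shiftedCauchyT_mul_eq hlam hlam' heq hz
  rcases hlam.lt_or_eq with hpos | hreal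
  · exact eq_of_mul_eq_of_im_pos hpos hlam' (hmul lam hpos)
  rcases hlam'.lt_or_eq with hpos' | hreal'
  · exact (eq_of_mul_eq_of_im_pos hpos' hlam (hmul lam' hpos').symm).symm
  obtain ⟨x, rfl⟩ : ∃ x : ℝ, (x : ℂ) = lam := ⟨lam.re, ext (by simp) (by simp [hreal])⟩
  obtain ⟨x', rfl⟩ : ∃ x : ℝ, (x : ℂ) = lam' := ⟨lam'.re, ext (by simp) (by simp [hreal'])⟩
  simp only [conj_ofReal] at hmul
  exact congrArg ofReal (eq_of_mul_eq_ofReal fun ε hε => hmul _ (by simpa using hε))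

lemma eq_of_shiftedCauchyT_eventuallyEq
    (h : ∀ᶠ y : ℝ in atTop, shiftedCauchyT σ d (y * I) = shiftedCauchyT σ' d' (y * I)) :
    d = d' := by
  have hdiff : ∀ᶠ y : ℝ in atTop, ((d - d' : ℝ) : ℂ) = cauchyT σ' (y * I) - cauchyT σ (y * I) := by
    filter_upwards [h] with y hy
    simp only [shiftedCauchyT] at hy
    push_cast
    linear_combination hy
  have hlim := (tendsto_cauchyT_atTop (σ := σ')).sub (tendsto_cauchyT_atTop (σ := σ))
  rw [sub_zero] at hlim
  exact sub_eq_zero.1 <| ofReal_eq_zero.1 <|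
    tendsto_nhds_unique (tendsto_const_nhds.congr' hdiff) hlim

end Representation

theorem stmt_2_general (lam lam' : ℂ) (hlam : 0 ≤ lam.im) (hlam' : 0 ≤ lam'.im)
    (d d' : ℝ) (σ σ' : Measure ℝ) (hf : IsFiniteMeasure σ) (hf' : IsFiniteMeasure σ')
    (hc : IsCompact (msupport σ)) (hc' : IsCompact (msupport σ'))
    (heq : ∀ z : ℂ, 0 < z.im → z ≠ lam → z ≠ lam' →
      (z + (d : ℂ) + cauchyT σ z) / ((z - lam) * (z - (starRingEnd ℂ) lam)) =
      (z + (d' : ℂ) + cauchyT σ' z) / ((z - lam') * (z - (starRingEnd ℂ) lam'))) :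
    lam = lam' ∧ d = d' ∧ σ = σ' := by
  obtain rfl : lam = lam' := eq_of_shiftedCauchyT_div_eq hlam hlam' heq
  have hN : ∀ᶠ y : ℝ in atTop, shiftedCauchyT σ d (y * I) = shiftedCauchyT σ' d' (y * I) := by
    filter_upwards [eventually_gt_atTop (max 0 lam.im)] with y hy
    have hz : 0 < (y * I).im := by simpa using (le_max_left _ _).trans_lt hy
    have hne : y * I ≠ lam := fun h => by
      have := congrArg im h
      simp only [mul_im, ofReal_re, I_im, mul_one, ofReal_im, I_re, mul_zero, add_zero] at this
      linarith [le_max_right 0 lam.im]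
    exact (div_left_inj' (mul_ne_zero (sub_ne_zero.2 hne) (sub_conj_ne_zero hz hlam))).1
      (heq _ hz hne hne)
  obtain rfl := eq_of_shiftedCauchyT_eventuallyEq hN
  refine ⟨rfl, rfl, ext_of_cauchyT_eventuallyEq hc hc' ?_⟩
  filter_upwards [hN] with y hy
  simpa [shiftedCauchyT] using hy

/-- Uniqueness of the representation (i) in Theorem 1. -/
theorem stmt_2 (lam lam' : ℂ) (hlam : 0 ≤ lam.im) (hlam' : 0 ≤ lam'.im)
    (d d' : ℝ) (σ σ' : Measure ℝ) (hf : IsFiniteMeasure σ) (hf' : IsFiniteMeasure σ')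
    (h0 : σ ≠ 0) (h0' : σ' ≠ 0)
    (hc : IsCompact (msupport σ)) (hc' : IsCompact (msupport σ'))
    (hi : (msupport σ).Infinite) (hi' : (msupport σ').Infinite)
    (heq : ∀ z : ℂ, 0 < z.im → z ≠ lam → z ≠ lam' →
      (z + (d : ℂ) + cauchyT σ z) / ((z - lam) * (z - (starRingEnd ℂ) lam)) =
      (z + (d' : ℂ) + cauchyT σ' z) / ((z - lam') * (z - (starRingEnd ℂ) lam'))) :
    lam = lam' ∧ d = d' ∧ σ = σ' :=
  stmt_2_general lam lam' hlam hlam' d d' σ σ' hf hf' hc hc' heq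
end

section
/- The operator H has exactly one eigenvalue of nonpositive type: there exists exactly one λ ∈ ℂ with Im λ ≥ 0 for which there is a nonzero f ∈ ℓ²(ℕ) with H f = λ f and −|f_0|² + Σ_{j=1}^{∞} |f_j|² ≤ 0. -/
/-!
Write `[x, y] = ⟪x, J y⟫` with `J = diag(-1, 1, 1, …)`, so that the nonpositivity condition reads
`Re [f, f] ≤ 0`. The operator `H` is `[·,·]`-symmetric: the partial sums of `[H x, y] - [x, H y]`
telescope to the Wronskian `b m (conj x (m+1) y m - conj x m y (m+1))`, which tends to `0`
because `b` is bounded.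

Existence. A `B`-symmetric operator on a finite-dimensional space with a `B`-negative vector has
an eigenvector `v` with `Re B v v ≤ 0`: otherwise every eigenvalue is real, every generalised
eigenvector is an eigenvector (the top of a Jordan chain would be neutral), and eigenspaces of
distinct eigenvalues are `B`-orthogonal, so `B` would be nonnegative. Applied to the finite
sections of `H` (negative at `e₀`) and normalised by `x 0 = 1`, this gives approximate
eigenvectors of norm `≤ √2` with eigenvalues of modulus `≤ √2 ‖H‖`. A coordinatewise convergent
subsequence has an eigenvector of `H` as its limit, since each row of `H` involves only three
coordinates; as `H` is real, conjugating makes `Im λ ≥ 0`.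

Uniqueness. If `λ ≠ μ` lie in the closed upper half-plane then `conj λ ≠ μ`, so the eigenvectors
`f`, `g` are `[·,·]`-orthogonal. Then `g 0 • f - f 0 • g` has vanishing `0`-th coordinate, so its
form is its squared norm, yet the form is `≤ 0`; hence `g 0 • f = f 0 • g` and `λ = μ`.
-/

open Filter Topology ComplexConjugate
open scoped lp InnerProductSpace

namespace PontryaginJacobi

section SelfAdjointForm

variable {V : Type*} [AddCommGroup V] [Module ℂ V] {B : V →ₗ⋆[ℂ] V →ₗ[ℂ] ℂ}
  {T : Module.End ℂ V}

theorem apply_eq_zero_of_eigenvectors (hT : ∀ x y, B (T x) y = B x (T y)) {x y : V} {lam mu : ℂ}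
    (hx : T x = lam • x) (hy : T y = mu • y) (h : conj lam ≠ mu) : B x y = 0 := by
  have key : (mu - conj lam) * B x y = 0 := by
    have := hT x y
    rw [hx, hy, LinearMap.map_smulₛₗ₂, map_smul] at this
    simp only [smul_eq_mul, starRingEnd_apply] at this ⊢
    linear_combination -this
  exact (mul_eq_zero.mp key).resolve_left (sub_ne_zero.mpr h.symm)

theorem conj_eq_of_forall_eigenvector_pos (hT : ∀ x y, B (T x) y = B x (T y))
    (hpos : ∀ (lam : ℂ) (v : V), v ≠ 0 → T v = lam • v → 0 < (B v v).re) {lam : ℂ} {v : V}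
    (hv : v ≠ 0) (hev : T v = lam • v) :
    conj lam = lam := by
  by_contra h
  simpa [apply_eq_zero_of_eigenvectors hT hev hev h] using hpos lam v hv hev

theorem maxGenEigenspace_le_eigenspace_of_forall_eigenvector_pos
    (hT : ∀ x y, B (T x) y = B x (T y))
    (hpos : ∀ (lam : ℂ) (v : V), v ≠ 0 → T v = lam • v → 0 < (B v v).re) (mu : ℂ) :
    T.maxGenEigenspace mu ≤ T.eigenspace mu := by
  set S := T - mu • 1
  have hS : ∀ x, T x = mu • x ↔ S x = 0 := fun x => by simp [S, sub_eq_zero]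
  have ker_sq : ∀ x, S (S x) = 0 → S x = 0 := by
    intro x hx
    by_contra hne
    have hev : T (S x) = mu • S x := (hS _).mpr hx
    have hreal := conj_eq_of_forall_eigenvector_pos hT hpos hne hev
    have hSsym : B (S x) (S x) = B x (S (S x)) := by
      simp only [S, LinearMap.sub_apply, LinearMap.smul_apply, Module.End.one_apply, map_sub,
        LinearMap.map_smulₛₗ₂, map_smul, hT, hreal]
    simpa [hSsym, hx] using hpos mu _ hne hev
  intro x hx
  obtain ⟨k, hk⟩ := (Module.End.mem_maxGenEigenspace _ _ _).mp hx
  rw [Module.End.mem_eigenspace_iff, hS]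
  clear hx
  induction k generalizing x with
  | zero => simp_all
  | succ k ih => exact ker_sq x (ih (by rwa [pow_succ, Module.End.mul_apply] at hk))

theorem re_apply_self_nonneg_of_forall_eigenvector_pos [FiniteDimensional ℂ V]
    (hT : ∀ x y, B (T x) y = B x (T y))
    (hpos : ∀ (lam : ℂ) (v : V), v ≠ 0 → T v = lam • v → 0 < (B v v).re) (x : V) :
    0 ≤ (B x x).re := by
  have hx : x ∈ ⨆ mu, T.eigenspace mu := by
    rw [← le_antisymm (iSup_mono (maxGenEigenspace_le_eigenspace_of_forall_eigenvector_pos hT hpos))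
      (iSup_mono fun _ => Module.End.eigenspace_le_maxGenEigenspace),
      Module.End.iSup_maxGenEigenspace_eq_top]
    trivial
  obtain ⟨c, hc, rfl⟩ := (Submodule.mem_iSup_iff_exists_finsupp _ _).mp hx
  replace hc : ∀ mu, T (c mu) = mu • c mu := fun mu => Module.End.mem_eigenspace_iff.mp (hc mu)
  have horth : ∀ mu nu, mu ≠ nu → B (c mu) (c nu) = 0 := by
    intro mu nu hne
    by_cases h0 : c mu = 0
    · simp [h0]
    refine apply_eq_zero_of_eigenvectors hT (hc mu) (hc nu) ?_
    rwa [conj_eq_of_forall_eigenvector_pos hT hpos h0 (hc mu)]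
  simp only [Finsupp.sum, map_sum, LinearMap.sum_apply, Complex.re_sum]
  refine Finset.sum_nonneg fun mu _ => ?_
  rw [Finset.sum_eq_single mu (fun nu _ hne => by simp [horth nu mu hne]) (by simp +contextual)]
  by_cases h0 : c mu = 0
  · simp [h0]
  · exact (hpos mu _ h0 (hc mu)).le

theorem exists_eigenvector_re_apply_self_nonpos [FiniteDimensional ℂ V]
    (hT : ∀ x y, B (T x) y = B x (T y)) {w : V} (hw : (B w w).re < 0) :
    ∃ (lam : ℂ) (v : V), v ≠ 0 ∧ T v = lam • v ∧ (B v v).re ≤ 0 := by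
  by_contra! h
  exact (re_apply_self_nonneg_of_forall_eigenvector_pos hT h w).not_gt hw

end SelfAdjointForm

noncomputable def signedInner : ℓ²(ℕ, ℂ) →ₗ⋆[ℂ] ℓ²(ℕ, ℂ) →ₗ[ℂ] ℂ :=
  LinearMap.mk₂'ₛₗ (starRingEnd ℂ) (RingHom.id ℂ) (fun x y => ⟪x, y⟫_ℂ - 2 * (conj (x 0) * y 0))
    (fun _ _ _ => by simp only [inner_add_left, lp.coeFn_add, Pi.add_apply, map_add]; ring)
    (fun _ _ _ => by
      simp only [inner_smul_left, lp.coeFn_smul, Pi.smul_apply, smul_eq_mul, map_mul]; ring)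
    (fun _ _ _ => by simp only [inner_add_right, lp.coeFn_add, Pi.add_apply]; ring)
    (fun _ _ _ => by
      simp only [inner_smul_right, lp.coeFn_smul, Pi.smul_apply, smul_eq_mul, RingHom.id_apply]
      ring)

theorem signedInner_apply (x y : ℓ²(ℕ, ℂ)) :
    signedInner x y = ⟪x, y⟫_ℂ - 2 * (conj (x 0) * y 0) := rfl

theorem hasSum_signedInner (x y : ℓ²(ℕ, ℂ)) :
    HasSum (fun k => (if k = 0 then -1 else 1) * (conj (x k) * y k)) (signedInner x y) := by
  have hinner : HasSum (fun k => conj (x k) * y k) ⟪x, y⟫_ℂ := by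
    simpa [mul_comm] using lp.hasSum_inner (𝕜 := ℂ) x y
  have hzero : HasSum (fun k => if k = 0 then 2 * (conj (x 0) * y 0) else 0)
      (2 * (conj (x 0) * y 0)) := hasSum_ite_eq 0 _
  refine (hinner.sub hzero).congr_fun fun k => ?_
  rcases eq_or_ne k 0 with rfl | hk
  · simp only [if_true]
    ring
  · simp [hk]

theorem signedInner_conj_symm (x y : ℓ²(ℕ, ℂ)) : conj (signedInner y x) = signedInner x y := by
  simp only [signedInner_apply, map_sub, map_mul, inner_conj_symm, Complex.conj_conj, map_ofNat]
  ring

theorem signedInner_self_of_apply_zero {x : ℓ²(ℕ, ℂ)} (hx : x 0 = 0) :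
    signedInner x x = (‖x‖ ^ 2 : ℝ) := by
  simp [signedInner_apply, hx, inner_self_eq_norm_sq_to_K]

theorem re_signedInner_self_eq_norm_sq_sub (x : ℓ²(ℕ, ℂ)) :
    (signedInner x x).re = ‖x‖ ^ 2 - 2 * ‖x 0‖ ^ 2 := by
  simp [signedInner_apply, inner_self_eq_norm_sq_to_K, Complex.conj_mul', ← Complex.ofReal_pow]

theorem re_signedInner_self (x : ℓ²(ℕ, ℂ)) :
    (signedInner x x).re = -‖x 0‖ ^ 2 + ∑' j, ‖x (j + 1)‖ ^ 2 := by
  have h := lp.hasSum_norm (p := 2) (by norm_num) x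
  simp only [ENNReal.toReal_ofNat, Real.rpow_two] at h
  rw [re_signedInner_self_eq_norm_sq_sub, ← h.tsum_eq, h.summable.tsum_eq_zero_add]
  ring

theorem re_signedInner_self_nonpos_iff {x : ℓ²(ℕ, ℂ)} (hx : x 0 = 1) :
    (signedInner x x).re ≤ 0 ↔ ‖x‖ ≤ √2 := by
  rw [re_signedInner_self_eq_norm_sq_sub, hx, norm_one, Real.le_sqrt (norm_nonneg _) zero_le_two]
  constructor <;> intro h <;> linarith

theorem re_signedInner_smul_self (c : ℂ) (x : ℓ²(ℕ, ℂ)) :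
    (signedInner (c • x) (c • x)).re = ‖c‖ ^ 2 * (signedInner x x).re := by
  rw [LinearMap.map_smulₛₗ₂, map_smul, smul_eq_mul, smul_eq_mul, ← mul_assoc, Complex.conj_mul',
    ← Complex.ofReal_pow, Complex.re_ofReal_mul]

theorem apply_zero_ne_zero_of_re_signedInner_self_nonpos {x : ℓ²(ℕ, ℂ)} (hx : x ≠ 0)
    (hneg : (signedInner x x).re ≤ 0) : x 0 ≠ 0 := by
  intro h0
  rw [signedInner_self_of_apply_zero h0, Complex.ofReal_re] at hneg
  exact hx (norm_eq_zero.mp (by nlinarith [norm_nonneg x]))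

theorem smul_eq_smul_of_signedInner_eq_zero {f g : ℓ²(ℕ, ℂ)} (hf : (signedInner f f).re ≤ 0)
    (hg : (signedInner g g).re ≤ 0) (hfg : signedInner f g = 0) : g 0 • f = f 0 • g := by
  have hgf : signedInner g f = 0 := by rw [← signedInner_conj_symm, hfg, map_zero]
  set D := g 0 • f - f 0 • g
  have hD0 : D 0 = 0 := by
    simp only [D, lp.coeFn_sub, lp.coeFn_smul, Pi.sub_apply, Pi.smul_apply, smul_eq_mul]
    ring
  have hDD : (signedInner D D).re = ‖g 0‖ ^ 2 * (signedInner f f).re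
      + ‖f 0‖ ^ 2 * (signedInner g g).re := by
    simp [D, hfg, hgf, ← mul_assoc, Complex.conj_mul', ← Complex.ofReal_pow]
  rw [signedInner_self_of_apply_zero hD0, Complex.ofReal_re] at hDD
  have : ‖D‖ = 0 := by nlinarith [norm_nonneg D, sq_nonneg ‖g 0‖, sq_nonneg ‖f 0‖]
  exact sub_eq_zero.mp (norm_eq_zero.mp this)

theorem signedInner_congr_left {x x' y : ℓ²(ℕ, ℂ)} (h : ∀ k, y k ≠ 0 → x k = x' k) :
    signedInner x y = signedInner x' y := by
  refine (hasSum_signedInner x y).unique ((hasSum_signedInner x' y).congr_fun fun k => ?_)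
  by_cases hk : y k = 0
  · simp [hk]
  · rw [h k hk]

theorem tendsto_apply_atTop_zero (x : ℓ²(ℕ, ℂ)) : Tendsto (fun k => x k) atTop (𝓝 0) := by
  have h := (lp.hasSum_norm (p := 2) (by norm_num) x).summable.tendsto_atTop_zero.sqrt
  simp only [ENNReal.toReal_ofNat, Real.rpow_two, Real.sqrt_sq (norm_nonneg _), Real.sqrt_zero] at h
  exact tendsto_zero_iff_norm_tendsto_zero.mpr h

def jacobi (a b : ℕ → ℝ) (x : ℕ → ℂ) : ℕ → ℂ
  | 0 => a 0 * x 0 - b 0 * x 1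
  | k + 1 => b k * x k + a (k + 1) * x (k + 1) + b (k + 1) * x (k + 2)

theorem sum_range_jacobi_green (a b : ℕ → ℝ) (x y : ℕ → ℂ) (m : ℕ) :
    ∑ k ∈ Finset.range (m + 1), (if k = 0 then -1 else 1) *
        (conj (jacobi a b x k) * y k - conj (x k) * jacobi a b y k) =
      b m * (conj (x (m + 1)) * y m - conj (x m) * y (m + 1)) := by
  induction m with
  | zero =>
    simp only [zero_add, Finset.sum_range_one, ↓reduceIte, jacobi, map_sub, map_mul,
      Complex.conj_ofReal]
    ring
  | succ m ih =>
    rw [Finset.sum_range_succ, ih]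
    simp only [Nat.add_one_ne_zero, ↓reduceIte, jacobi, map_add, map_mul, Complex.conj_ofReal]
    ring

theorem jacobi_star (a b : ℕ → ℝ) (x : ℕ → ℂ) : jacobi a b (star x) = star (jacobi a b x) := by
  funext k
  cases k <;> simp [jacobi]

theorem continuous_jacobi_apply (a b : ℕ → ℝ) (k : ℕ) :
    Continuous fun x : ℕ → ℂ => jacobi a b x k := by
  cases k <;> simp only [jacobi] <;> fun_prop

noncomputable def extendByZero (N : ℕ) : (Fin N → ℂ) →ₗ[ℂ] ℓ²(ℕ, ℂ) where
  toFun v := ⟨fun k => if h : k < N then v ⟨k, h⟩ else 0,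
    (memℓp_zero ((Set.finite_lt_nat N).subset fun k hk => by
      by_contra h
      exact hk (dif_neg h))).of_exponent_ge bot_le⟩
  map_add' v w := lp.ext <| funext fun k => show (if h : k < N then (v + w) ⟨k, h⟩ else 0) =
      (if h : k < N then v ⟨k, h⟩ else 0) + (if h : k < N then w ⟨k, h⟩ else 0) by
    split_ifs <;> simp
  map_smul' c v := lp.ext <| funext fun k => show (if h : k < N then (c • v) ⟨k, h⟩ else 0) =
      c * (if h : k < N then v ⟨k, h⟩ else 0) by
    split_ifs <;> simp

theorem extendByZero_apply {N : ℕ} (v : Fin N → ℂ) (k : ℕ) :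
    extendByZero N v k = if h : k < N then v ⟨k, h⟩ else 0 := rfl

def restrictFin (N : ℕ) : ℓ²(ℕ, ℂ) →ₗ[ℂ] (Fin N → ℂ) where
  toFun x i := x i
  map_add' _ _ := rfl
  map_smul' _ _ := rfl

theorem restrictFin_apply {N : ℕ} (x : ℓ²(ℕ, ℂ)) (i : Fin N) : restrictFin N x i = x i := rfl

noncomputable def compression (H : ℓ²(ℕ, ℂ) →L[ℂ] ℓ²(ℕ, ℂ)) (N : ℕ) : Module.End ℂ (Fin N → ℂ) :=
  restrictFin N ∘ₗ H.toLinearMap ∘ₗ extendByZero N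

theorem signedInner_extendByZero_restrictFin {N : ℕ} (x : ℓ²(ℕ, ℂ)) (w : Fin N → ℂ) :
    signedInner (extendByZero N (restrictFin N x)) (extendByZero N w) =
      signedInner x (extendByZero N w) := by
  refine signedInner_congr_left fun k hk => ?_
  by_cases h : k < N
  · simp [extendByZero_apply, h, restrictFin_apply]
  · simp [extendByZero_apply, h] at hk

variable {a b : ℕ → ℝ} {H : ℓ²(ℕ, ℂ) →L[ℂ] ℓ²(ℕ, ℂ)}

theorem signedInner_map_left_eq_map_right (hbbd : ∃ C : ℝ, ∀ j, |b j| ≤ C)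
    (hH : ∀ x, ⇑(H x) = jacobi a b ⇑x) (x y : ℓ²(ℕ, ℂ)) :
    signedInner (H x) y = signedInner x (H y) := by
  obtain ⟨C, hC⟩ := hbbd
  have hx := tendsto_apply_atTop_zero x
  have hy := tendsto_apply_atTop_zero y
  have hwronski : Tendsto (fun m => (b m : ℂ) * (conj (x (m + 1)) * y m - conj (x m) * y (m + 1)))
      atTop (𝓝 0) := by
    refine isBoundedUnder_le_mul_tendsto_zero
      (isBoundedUnder_of ⟨C, fun m => by simpa using hC m⟩) ?_
    simpa using ((hx.comp (tendsto_add_atTop_nat 1)).star.mul hy).sub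
      (hx.star.mul (hy.comp (tendsto_add_atTop_nat 1)))
  have hsum := ((hasSum_signedInner (H x) y).sub
    (hasSum_signedInner x (H y))).tendsto_sum_nat.comp (tendsto_add_atTop_nat 1)
  rw [← sub_eq_zero]
  refine tendsto_nhds_unique (hsum.congr fun m => ?_) hwronski
  simp only [Function.comp_apply, hH, ← mul_sub]
  exact sum_range_jacobi_green a b x y m

theorem map_star (hH : ∀ x, ⇑(H x) = jacobi a b ⇑x) (x : ℓ²(ℕ, ℂ)) : H (star x) = star (H x) :=
  lp.ext (by rw [hH, lp.coeFn_star, lp.coeFn_star, hH, jacobi_star])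

theorem signedInner_compression (hsym : ∀ x y, signedInner (H x) y = signedInner x (H y))
    {N : ℕ} (v w : Fin N → ℂ) :
    signedInner (extendByZero N (compression H N v)) (extendByZero N w) =
      signedInner (extendByZero N v) (extendByZero N (compression H N w)) := by
  simp only [compression, LinearMap.comp_apply, ContinuousLinearMap.coe_coe]
  rw [signedInner_extendByZero_restrictFin, hsym, ← signedInner_conj_symm,
    ← signedInner_extendByZero_restrictFin (H (extendByZero N w)) v, signedInner_conj_symm]

theorem exists_approx_eigenvector (hsym : ∀ x y, signedInner (H x) y = signedInner x (H y))
    (N : ℕ) : ∃ (lam : ℂ) (g : ℓ²(ℕ, ℂ)), g 0 = 1 ∧ (signedInner g g).re ≤ 0 ∧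
      ∀ k < N, H g k = lam * g k := by
  set B := (signedInner.comp (extendByZero (N + 1))).compl₂ (extendByZero (N + 1))
  have hneg : (B (Pi.single 0 1) (Pi.single 0 1)).re < 0 := by
    simp [B, re_signedInner_self, extendByZero_apply, Fin.ext_iff]
  obtain ⟨lam, v, hv, hev, hvneg⟩ := exists_eigenvector_re_apply_self_nonpos
    (T := compression H (N + 1)) (signedInner_compression hsym) hneg
  set u := extendByZero (N + 1) v
  have hu : u ≠ 0 := fun h => hv <| funext fun i => by
    simpa [u, extendByZero_apply, Nat.le_of_lt_succ i.isLt] using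
      congrArg (fun x : ℓ²(ℕ, ℂ) => x i) h
  have hu0 : u 0 ≠ 0 := apply_zero_ne_zero_of_re_signedInner_self_nonpos hu hvneg
  have hrow : ∀ k < N + 1, H u k = lam * u k := fun k hk => by
    simpa [compression, restrictFin_apply, u, extendByZero_apply, hk] using congrFun hev ⟨k, hk⟩
  refine ⟨lam, (u 0)⁻¹ • u, by simp [hu0], ?_, fun k hk => ?_⟩
  · rw [re_signedInner_smul_self]
    exact mul_nonpos_of_nonneg_of_nonpos (sq_nonneg _) hvneg
  · simp only [map_smul, lp.coeFn_smul, Pi.smul_apply, hrow k (by omega), smul_eq_mul]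
    ring

theorem map_eq_smul_of_tendsto (hH : ∀ x, ⇑(H x) = jacobi a b ⇑x) {g : ℕ → ℓ²(ℕ, ℂ)}
    {lam : ℕ → ℂ} {f : ℓ²(ℕ, ℂ)} {mu : ℂ} (hrow : ∀ k, ∀ᶠ n in atTop, H (g n) k = lam n * g n k)
    (hg : Tendsto (fun n => ⇑(g n)) atTop (𝓝 ⇑f)) (hlam : Tendsto lam atTop (𝓝 mu)) :
    H f = mu • f := by
  refine lp.ext (funext fun k => ?_)
  rw [hH, lp.coeFn_smul, Pi.smul_apply, smul_eq_mul]
  refine tendsto_nhds_unique (((continuous_jacobi_apply a b k).tendsto _).comp hg) ?_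
  refine (hlam.mul (tendsto_pi_nhds.mp hg k)).congr' ?_
  filter_upwards [hrow k] with n hn
  rw [← hn, hH]
  rfl

theorem exists_eigenvector_re_signedInner_self_nonpos (hH : ∀ x, ⇑(H x) = jacobi a b ⇑x)
    (hsym : ∀ x y, signedInner (H x) y = signedInner x (H y)) :
    ∃ (lam : ℂ) (f : ℓ²(ℕ, ℂ)), f ≠ 0 ∧ H f = lam • f ∧ (signedInner f f).re ≤ 0 := by
  choose lam g hg0 hgneg hrow using fun n => exists_approx_eigenvector hsym (n + 1)
  have hnorm : ∀ n, ‖g n‖ ≤ √2 := fun n => (re_signedInner_self_nonpos_iff (hg0 n)).mp (hgneg n)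
  have hlam : ∀ n, ‖lam n‖ ≤ ‖H‖ * √2 := fun n =>
    calc ‖lam n‖ = ‖H (g n) 0‖ := by rw [hrow n 0 (by omega), hg0, mul_one]
      _ ≤ ‖H (g n)‖ := lp.norm_apply_le_norm two_ne_zero _ 0
      _ ≤ ‖H‖ * √2 := (H.le_opNorm _).trans (by gcongr; exact hnorm n)
  have hK : IsCompact ((Set.univ.pi fun _ : ℕ => Metric.closedBall (0 : ℂ) √2) ×ˢ
      Metric.closedBall (0 : ℂ) (‖H‖ * √2)) :=
    (isCompact_univ_pi fun _ => isCompact_closedBall _ _).prod (isCompact_closedBall _ _)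
  obtain ⟨⟨z, mu⟩, -, φ, hφ, hlim⟩ := hK.tendsto_subseq (x := fun n => (⇑(g n), lam n))
    fun n => ⟨fun k _ => by simpa using (lp.norm_apply_le_norm two_ne_zero (g n) k).trans (hnorm n),
      by simpa using hlam n⟩
  have hz : Tendsto (fun n => ⇑(g (φ n))) atTop (𝓝 z) := (continuous_fst.tendsto _).comp hlim
  have hmu : Tendsto (fun n => lam (φ n)) atTop (𝓝 mu) := (continuous_snd.tendsto _).comp hlim
  have hmem : Memℓp z 2 := lp.memℓp_of_tendsto (F := g ∘ φ)
    (isBounded_iff_forall_norm_le.mpr ⟨√2, by rintro _ ⟨n, rfl⟩; exact hnorm _⟩) hz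
  set f : ℓ²(ℕ, ℂ) := ⟨z, hmem⟩
  have hf0 : f 0 = 1 := tendsto_nhds_unique (tendsto_pi_nhds.mp hz 0) (by simp [hg0])
  have hfnorm : ‖f‖ ≤ √2 := lp.norm_le_of_tendsto (Eventually.of_forall fun n => hnorm (φ n)) hz
  refine ⟨mu, f, fun h => by simp [h] at hf0, map_eq_smul_of_tendsto hH (fun k => ?_) hz hmu, ?_⟩
  · filter_upwards [eventually_ge_atTop k] with n hn
    exact hrow (φ n) k (Nat.lt_succ_of_le (hn.trans (hφ.id_le n)))
  · exact (re_signedInner_self_nonpos_iff hf0).mpr hfnorm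

theorem exists_eigenvector_im_nonneg (hH : ∀ x, ⇑(H x) = jacobi a b ⇑x)
    (hsym : ∀ x y, signedInner (H x) y = signedInner x (H y)) :
    ∃ (lam : ℂ) (f : ℓ²(ℕ, ℂ)), f ≠ 0 ∧ H f = lam • f ∧ (signedInner f f).re ≤ 0 ∧
      0 ≤ lam.im := by
  obtain ⟨lam, f, hf, hfH, hfneg⟩ := exists_eigenvector_re_signedInner_self_nonpos hH hsym
  rcases le_or_gt 0 lam.im with him | him
  · exact ⟨lam, f, hf, hfH, hfneg, him⟩
  · refine ⟨conj lam, star f, star_ne_zero.mpr hf, ?_, ?_, by simpa using him.le⟩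
    · rw [map_star hH, hfH, star_smul]
      rfl
    · simpa [re_signedInner_self, lp.star_apply] using hfneg

theorem eq_of_eigenvectors (hsym : ∀ x y, signedInner (H x) y = signedInner x (H y))
    {lam mu : ℂ} {f g : ℓ²(ℕ, ℂ)} (hlam : 0 ≤ lam.im) (hmu : 0 ≤ mu.im) (hf : f ≠ 0) (hg : g ≠ 0)
    (hfH : H f = lam • f) (hgH : H g = mu • g) (hfneg : (signedInner f f).re ≤ 0)
    (hgneg : (signedInner g g).re ≤ 0) : lam = mu := by
  by_contra hne
  have hconj : conj lam ≠ mu := fun h => hne <| by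
    have him : lam.im = 0 := by linarith [congrArg Complex.im h, Complex.conj_im lam]
    rwa [← Complex.conj_eq_iff_im.mpr him]
  have hprop := smul_eq_smul_of_signedInner_eq_zero hfneg hgneg
    (apply_eq_zero_of_eigenvectors hsym hfH hgH hconj)
  have hmul : lam • (g 0 • f) = mu • (g 0 • f) := by
    rw [smul_comm, ← hfH, ← map_smul, hprop, map_smul, hgH, smul_comm]
  have hg0 := apply_zero_ne_zero_of_re_signedInner_self_nonpos hg hgneg
  exact hne (smul_left_injective ℂ (smul_ne_zero hg0 hf) hmul)

end PontryaginJacobi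

open PontryaginJacobi in
theorem stmt_4_general
    (a b : ℕ → ℝ) (hbbd : ∃ C : ℝ, ∀ j, |b j| ≤ C)
    (H : lp (fun _ : ℕ => ℂ) 2 →L[ℂ] lp (fun _ : ℕ => ℂ) 2)
    (hH0 : ∀ x : lp (fun _ : ℕ => ℂ) 2,
      (H x : ∀ _ : ℕ, ℂ) 0 = (a 0 : ℂ) * (x : ∀ _ : ℕ, ℂ) 0 - (b 0 : ℂ) * (x : ∀ _ : ℕ, ℂ) 1)
    (hHk : ∀ x : lp (fun _ : ℕ => ℂ) 2, ∀ k : ℕ,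
      (H x : ∀ _ : ℕ, ℂ) (k + 1) = (b k : ℂ) * (x : ∀ _ : ℕ, ℂ) k
        + (a (k + 1) : ℂ) * (x : ∀ _ : ℕ, ℂ) (k + 1) + (b (k + 1) : ℂ) * (x : ∀ _ : ℕ, ℂ) (k + 2))
    :
    ∃! lam : ℂ, 0 ≤ lam.im ∧ ∃ f : lp (fun _ : ℕ => ℂ) 2, f ≠ 0 ∧ H f = lam • f ∧
      -‖(f : ∀ _ : ℕ, ℂ) 0‖ ^ 2 + ∑' j : ℕ, ‖(f : ∀ _ : ℕ, ℂ) (j + 1)‖ ^ 2 ≤ 0 := by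
  have hH : ∀ x, ⇑(H x) = jacobi a b ⇑x := fun x => funext fun k => by
    cases k with
    | zero => exact hH0 x
    | succ k => exact hHk x k
  have hsym := signedInner_map_left_eq_map_right hbbd hH
  obtain ⟨lam, f, hf, hfH, hfneg, hlam⟩ := exists_eigenvector_im_nonneg hH hsym
  refine ⟨lam, ⟨hlam, f, hf, hfH, by rwa [← re_signedInner_self]⟩, ?_⟩
  rintro mu ⟨hmu, g, hg, hgH, hgneg⟩
  exact eq_of_eigenvectors hsym hmu hlam hg hf hgH hfH (by rwa [re_signedInner_self]) hfneg

/-- The operator `H` has exactly one eigenvalue of nonpositive type. -/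
theorem stmt_4
    (a b : ℕ → ℝ) (ha : ∃ C : ℝ, ∀ j, |a j| ≤ C) (hbbd : ∃ C : ℝ, ∀ j, |b j| ≤ C)
    (hb : ∀ j, 0 < b j)
    (H : lp (fun _ : ℕ => ℂ) 2 →L[ℂ] lp (fun _ : ℕ => ℂ) 2)
    (hH0 : ∀ x : lp (fun _ : ℕ => ℂ) 2,
      (H x : ∀ _ : ℕ, ℂ) 0 = (a 0 : ℂ) * (x : ∀ _ : ℕ, ℂ) 0 - (b 0 : ℂ) * (x : ∀ _ : ℕ, ℂ) 1)
    (hHk : ∀ x : lp (fun _ : ℕ => ℂ) 2, ∀ k : ℕ,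
      (H x : ∀ _ : ℕ, ℂ) (k + 1) = (b k : ℂ) * (x : ∀ _ : ℕ, ℂ) k
        + (a (k + 1) : ℂ) * (x : ∀ _ : ℕ, ℂ) (k + 1) + (b (k + 1) : ℂ) * (x : ∀ _ : ℕ, ℂ) (k + 2))
    :
    ∃! lam : ℂ, 0 ≤ lam.im ∧ ∃ f : lp (fun _ : ℕ => ℂ) 2, f ≠ 0 ∧ H f = lam • f ∧
      -‖(f : ∀ _ : ℕ, ℂ) 0‖ ^ 2 + ∑' j : ℕ, ‖(f : ∀ _ : ℕ, ℂ) (j + 1)‖ ^ 2 ≤ 0 :=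
  stmt_4_general a b hbbd H hH0 hHk
end

section
/- The spectrum of H contains at most one point with strictly positive imaginary part, and every spectral point of H with strictly positive imaginary part is an eigenvalue of H. -/
/-!
Write `H = J - K`, where `J` is the self-adjoint Jacobi operator with off-diagonal entries `b`
and `K = 2 b₀ ⟨e₁, ·⟩ e₀` has rank one. For nonreal `z` the operator `z - J` is invertible and
`z - H = (z - J) (1 + (z - J)⁻¹ K)`; a rank-one perturbation of the identity is invertible unless
it has a kernel, and a kernel vector yields an eigenvector of `H` for `z`.

If `H f = z f` and `H g = w g` with `z, w` in the upper half-plane, the symmetry of `J` gives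
`⟨f, g⟩ = 2 conj(f₀) g₀` (the indefinite form `⟨f, g⟩ - 2 conj(f₀) g₀` vanishes on such pairs).
Hence `‖f‖² = 2|f₀|²`, `‖g‖² = 2|g₀|²`, so equality holds in Cauchy–Schwarz, `g ∈ ℂ f`, and `z = w`.
-/

open ComplexConjugate
open scoped lp InnerProductSpace

section RankOne

variable {𝕜 E : Type*} [NontriviallyNormedField 𝕜] [NormedAddCommGroup E] [NormedSpace 𝕜 E]

theorem ContinuousLinearMap.smulRight_mul_smulRight_self (φ : E →L[𝕜] 𝕜) (u : E) :
    φ.smulRight u * φ.smulRight u = φ u • φ.smulRight u := by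
  ext x
  simp [smul_smul, mul_comm]

/-- Sherman–Morrison: the inverse is `1 - (1 + φ u)⁻¹ • φ.smulRight u`. -/
theorem ContinuousLinearMap.isUnit_one_add_smulRight {φ : E →L[𝕜] 𝕜} {u : E}
    (h : 1 + φ u ≠ 0) : IsUnit (1 + φ.smulRight u) := by
  have hP := φ.smulRight_mul_smulRight_self u
  set P := φ.smulRight u
  have key : (1 + φ u)⁻¹ • (P + φ u • P) = P := by
    rw [show P + φ u • P = (1 + φ u) • P by module, smul_smul, inv_mul_cancel₀ h, one_smul]
  refine ⟨⟨1 + P, 1 - (1 + φ u)⁻¹ • P, ?_, ?_⟩, rfl⟩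
  · rw [mul_sub, mul_one, mul_smul_comm, add_mul, one_mul, hP, key, add_sub_cancel_right]
  · rw [sub_mul, one_mul, smul_mul_assoc, mul_add, mul_one, hP, key, add_sub_cancel_right]

theorem ContinuousLinearMap.exists_apply_eq_smul_of_notMem_spectrum_add_smulRight
    {H : E →L[𝕜] E} (φ : E →L[𝕜] 𝕜) (u : E) {z : 𝕜}
    (hres : z ∉ spectrum 𝕜 (H + φ.smulRight u)) (hz : z ∈ spectrum 𝕜 H) :
    ∃ w ≠ 0, H w = z • w := by
  obtain ⟨R, hR⟩ := spectrum.notMem_iff.1 hres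
  set w := (R⁻¹ : (E →L[𝕜] E)ˣ).val u
  have hRw : R.val w = u := congr($(R.mul_inv) u)
  have hw : z • w - (H w + φ w • u) = u := by
    simpa [hR, Algebra.algebraMap_eq_smul_one] using hRw
  by_cases h : 1 + φ w = 0
  · refine ⟨w, fun hw0 => by simp [hw0] at h, ?_⟩
    linear_combination (norm := module) -h • u - hw
  · refine absurd ?_ (spectrum.mem_iff.1 hz)
    have hfac : algebraMap 𝕜 (E →L[𝕜] E) z - H = R * (1 + φ.smulRight w) := by
      ext x
      simp only [hR, Algebra.algebraMap_eq_smul_one, sub_apply, smul_apply, one_apply_eq_self,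
        mul_apply_eq_comp, add_apply, smulRight_apply, map_add, map_smul]
      linear_combination (norm := module) -φ x • hw
    rw [hfac]
    exact R.isUnit.mul (ContinuousLinearMap.isUnit_one_add_smulRight h)

end RankOne

theorem HilbertBasis.isSelfAdjoint_of_inner_apply {ι 𝕜 E : Type*} [RCLike 𝕜]
    [NormedAddCommGroup E] [InnerProductSpace 𝕜 E] [CompleteSpace E] (v : HilbertBasis ι 𝕜 E)
    {T : E →L[𝕜] E} (hT : ∀ i j, ⟪T (v i), v j⟫_𝕜 = ⟪v i, T (v j)⟫_𝕜) : IsSelfAdjoint T := by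
  rw [ContinuousLinearMap.isSelfAdjoint_iff']
  refine ContinuousLinearMap.ext_on
    (Submodule.dense_iff_topologicalClosure_eq_top.2 v.dense_span) ?_
  rintro _ ⟨j, rfl⟩
  refine v.repr.injective (lp.ext (funext fun i => ?_))
  simp only [v.repr_apply_apply, ContinuousLinearMap.adjoint_inner_right, hT]

theorem HilbertBasis.ofRepr_refl_apply {ι 𝕜 : Type*} [RCLike 𝕜] [DecidableEq ι] (i : ι) :
    HilbertBasis.ofRepr (LinearIsometryEquiv.refl 𝕜 ℓ²(ι, 𝕜)) i = lp.single 2 i 1 := by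
  rw [← HilbertBasis.repr_symm_single]
  rfl

structure IsSignFlippedJacobi (a b : ℕ → ℝ) (H : ℓ²(ℕ, ℂ) →L[ℂ] ℓ²(ℕ, ℂ)) : Prop where
  apply_zero : ∀ x, H x 0 = a 0 * x 0 - b 0 * x 1
  apply_succ : ∀ x k, H x (k + 1) = b k * x k + a (k + 1) * x (k + 1) + b (k + 1) * x (k + 2)

noncomputable def cornerFunctional (β : ℝ) : StrongDual ℂ ℓ²(ℕ, ℂ) :=
  (2 * β : ℂ) • innerSL ℂ (lp.single 2 1 1)

theorem cornerFunctional_apply (β : ℝ) (x : ℓ²(ℕ, ℂ)) : cornerFunctional β x = 2 * β * x 1 := by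
  simp [cornerFunctional, lp.inner_single_left]

noncomputable def cornerFlip (β : ℝ) : ℓ²(ℕ, ℂ) →L[ℂ] ℓ²(ℕ, ℂ) :=
  (cornerFunctional β).smulRight (lp.single 2 0 1)

theorem cornerFlip_apply (β : ℝ) (x : ℓ²(ℕ, ℂ)) :
    cornerFlip β x = (2 * β * x 1 : ℂ) • lp.single 2 0 1 := by
  simp [cornerFlip, cornerFunctional_apply]

theorem cornerFlip_apply_zero (β : ℝ) (x : ℓ²(ℕ, ℂ)) : cornerFlip β x 0 = 2 * β * x 1 := by
  simp [cornerFlip, cornerFunctional_apply]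

theorem cornerFlip_apply_succ (β : ℝ) (x : ℓ²(ℕ, ℂ)) (k : ℕ) : cornerFlip β x (k + 1) = 0 := by
  simp [cornerFlip]

theorem add_cornerFlip_apply_succ (H : ℓ²(ℕ, ℂ) →L[ℂ] ℓ²(ℕ, ℂ)) (β : ℝ) (x : ℓ²(ℕ, ℂ))
    (k : ℕ) : (H + cornerFlip β) x (k + 1) = H x (k + 1) := by
  simp [cornerFlip_apply_succ]

theorem conj_ne_of_im_pos {z w : ℂ} (hz : 0 < z.im) (hw : 0 < w.im) : conj z ≠ w := fun h => by
  have := congr(($h).im)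
  rw [Complex.conj_im] at this
  linarith

namespace IsSignFlippedJacobi

variable {a b : ℕ → ℝ} {H : ℓ²(ℕ, ℂ) →L[ℂ] ℓ²(ℕ, ℂ)}

theorem add_cornerFlip_apply_zero (hH : IsSignFlippedJacobi a b H) (x : ℓ²(ℕ, ℂ)) :
    (H + cornerFlip (b 0)) x 0 = a 0 * x 0 + b 0 * x 1 := by
  simp only [add_apply, lp.coeFn_add, Pi.add_apply, hH.apply_zero, cornerFlip_apply_zero]
  ring

theorem isSelfAdjoint_add (hH : IsSignFlippedJacobi a b H) :
    IsSelfAdjoint (H + cornerFlip (b 0)) := by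
  refine (HilbertBasis.ofRepr (.refl ℂ _)).isSelfAdjoint_of_inner_apply fun i j => ?_
  simp only [HilbertBasis.ofRepr_refl_apply, lp.inner_single_left, lp.inner_single_right]
  rcases i with _ | i <;> rcases j with _ | j <;>
    simp only [hH.add_cornerFlip_apply_zero, add_cornerFlip_apply_succ, hH.apply_succ] <;>
    simp only [lp.single_apply, Pi.single_apply, mul_ite, mul_one, mul_zero, RCLike.inner_apply,
      map_add, apply_ite (starRingEnd ℂ), Complex.conj_ofReal, map_zero, one_mul, map_one,
      Nat.add_right_cancel_iff]
  all_goals split_ifs <;> first | contradiction | omega | (subst_vars; simp)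

theorem inner_apply_sub_inner_apply (hH : IsSignFlippedJacobi a b H) (f g : ℓ²(ℕ, ℂ)) :
    ⟪H f, g⟫_ℂ - ⟪f, H g⟫_ℂ = 2 * b 0 * (conj (f 0) * g 1 - conj (f 1) * g 0) := by
  have hJ : ⟪(H + cornerFlip (b 0)) f, g⟫_ℂ = ⟪f, (H + cornerFlip (b 0)) g⟫_ℂ :=
    hH.isSelfAdjoint_add.isSymmetric f g
  simp only [add_apply, inner_add_left, inner_add_right, cornerFlip_apply,
    inner_smul_left, inner_smul_right, lp.inner_single_left, lp.inner_single_right,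
    RCLike.inner_apply, map_mul, map_ofNat, Complex.conj_ofReal, map_one] at hJ
  linear_combination hJ

theorem inner_eq_of_apply_eq_smul (hH : IsSignFlippedJacobi a b H) {f g : ℓ²(ℕ, ℂ)} {z w : ℂ}
    (hf : H f = z • f) (hg : H g = w • g) (hzw : conj z ≠ w) :
    ⟪f, g⟫_ℂ = 2 * conj (f 0) * g 0 := by
  have h := hH.inner_apply_sub_inner_apply f g
  rw [hf, hg, inner_smul_left, inner_smul_right] at h
  have hf0 : z * f 0 = a 0 * f 0 - b 0 * f 1 := by rw [← hH.apply_zero, hf]; rfl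
  have hg0 : w * g 0 = a 0 * g 0 - b 0 * g 1 := by rw [← hH.apply_zero, hg]; rfl
  have hf0' := congr(conj $hf0)
  simp only [map_mul, map_sub, Complex.conj_ofReal] at hf0'
  refine mul_left_cancel₀ (sub_ne_zero.2 hzw) ?_
  linear_combination h + 2 * conj (f 0) * hg0 - 2 * g 0 * hf0'

theorem norm_sq_eq_of_apply_eq_smul (hH : IsSignFlippedJacobi a b H) {f : ℓ²(ℕ, ℂ)} {z : ℂ}
    (hf : H f = z • f) (hz : 0 < z.im) : ‖f‖ ^ 2 = 2 * ‖f 0‖ ^ 2 := by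
  have h := congr(RCLike.re $(hH.inner_eq_of_apply_eq_smul hf hf (conj_ne_of_im_pos hz hz)))
  rw [inner_self_eq_norm_sq, mul_assoc, Complex.conj_mul'] at h
  exact_mod_cast h

theorem eq_of_apply_eq_smul (hH : IsSignFlippedJacobi a b H) {f g : ℓ²(ℕ, ℂ)} {z w : ℂ}
    (hf0 : f ≠ 0) (hg0 : g ≠ 0) (hf : H f = z • f) (hg : H g = w • g)
    (hz : 0 < z.im) (hw : 0 < w.im) : z = w := by
  have hCS : ‖⟪f, g⟫_ℂ‖ = ‖f‖ * ‖g‖ := by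
    rw [← sq_eq_sq₀ (norm_nonneg _) (by positivity), mul_pow, hH.norm_sq_eq_of_apply_eq_smul hf hz,
      hH.norm_sq_eq_of_apply_eq_smul hg hw,
      hH.inner_eq_of_apply_eq_smul hf hg (conj_ne_of_im_pos hz hw)]
    simp only [norm_mul, Complex.norm_conj, Complex.norm_ofNat]
    ring
  obtain ⟨r, -, rfl⟩ := (norm_inner_eq_norm_iff hf0 hg0).1 hCS
  refine smul_left_injective ℂ hg0 (?_ : z • r • f = w • r • f)
  rw [← hg, map_smul, hf, smul_comm]

theorem exists_apply_eq_smul_of_mem_spectrum (hH : IsSignFlippedJacobi a b H) {z : ℂ}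
    (hz : z ∈ spectrum ℂ H) (him : z.im ≠ 0) : ∃ f ≠ 0, H f = z • f := by
  have hJ : z ∉ spectrum ℂ (H + cornerFlip (b 0)) := fun h =>
    him (by rw [hH.isSelfAdjoint_add.mem_spectrum_eq_re h]; simp)
  exact ContinuousLinearMap.exists_apply_eq_smul_of_notMem_spectrum_add_smulRight _ _ hJ hz

end IsSignFlippedJacobi

theorem stmt_5_general
    (a b : ℕ → ℝ)
    (H : lp (fun _ : ℕ => ℂ) 2 →L[ℂ] lp (fun _ : ℕ => ℂ) 2)
    (hH0 : ∀ x : lp (fun _ : ℕ => ℂ) 2,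
      (H x : ∀ _ : ℕ, ℂ) 0 = (a 0 : ℂ) * (x : ∀ _ : ℕ, ℂ) 0 - (b 0 : ℂ) * (x : ∀ _ : ℕ, ℂ) 1)
    (hHk : ∀ x : lp (fun _ : ℕ => ℂ) 2, ∀ k : ℕ,
      (H x : ∀ _ : ℕ, ℂ) (k + 1) = (b k : ℂ) * (x : ∀ _ : ℕ, ℂ) k
        + (a (k + 1) : ℂ) * (x : ∀ _ : ℕ, ℂ) (k + 1) + (b (k + 1) : ℂ) * (x : ∀ _ : ℕ, ℂ) (k + 2))
    :
    Set.Subsingleton {z : ℂ | z ∈ spectrum ℂ H ∧ 0 < z.im} ∧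
    ∀ z ∈ spectrum ℂ H, 0 < z.im →
      ∃ f : lp (fun _ : ℕ => ℂ) 2, f ≠ 0 ∧ H f = z • f := by
  have hH : IsSignFlippedJacobi a b H := ⟨hH0, hHk⟩
  refine ⟨fun z ⟨hz, hzi⟩ w ⟨hw, hwi⟩ => ?_,
    fun z hz hzi => hH.exists_apply_eq_smul_of_mem_spectrum hz hzi.ne'⟩
  obtain ⟨f, hf0, hf⟩ := hH.exists_apply_eq_smul_of_mem_spectrum hz hzi.ne'
  obtain ⟨g, hg0, hg⟩ := hH.exists_apply_eq_smul_of_mem_spectrum hw hwi.ne'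
  exact hH.eq_of_apply_eq_smul hf0 hg0 hf hg hzi hwi

/-- The spectrum of `H` contains at most one point with strictly positive imaginary part,
and every such spectral point is an eigenvalue of `H`. -/
theorem stmt_5
    (a b : ℕ → ℝ) (ha : ∃ C : ℝ, ∀ j, |a j| ≤ C) (hbbd : ∃ C : ℝ, ∀ j, |b j| ≤ C)
    (hb : ∀ j, 0 < b j)
    (H : lp (fun _ : ℕ => ℂ) 2 →L[ℂ] lp (fun _ : ℕ => ℂ) 2)
    (hH0 : ∀ x : lp (fun _ : ℕ => ℂ) 2,
      (H x : ∀ _ : ℕ, ℂ) 0 = (a 0 : ℂ) * (x : ∀ _ : ℕ, ℂ) 0 - (b 0 : ℂ) * (x : ∀ _ : ℕ, ℂ) 1)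
    (hHk : ∀ x : lp (fun _ : ℕ => ℂ) 2, ∀ k : ℕ,
      (H x : ∀ _ : ℕ, ℂ) (k + 1) = (b k : ℂ) * (x : ∀ _ : ℕ, ℂ) k
        + (a (k + 1) : ℂ) * (x : ∀ _ : ℕ, ℂ) (k + 1) + (b (k + 1) : ℂ) * (x : ∀ _ : ℕ, ℂ) (k + 2))
    :
    Set.Subsingleton {z : ℂ | z ∈ spectrum ℂ H ∧ 0 < z.im} ∧
    ∀ z ∈ spectrum ℂ H, 0 < z.im →
      ∃ f : lp (fun _ : ℕ => ℂ) 2, f ≠ 0 ∧ H f = z • f :=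
  stmt_5_general a b H hH0 hHk
end

section
/- Corollary 1 (convergence of the eigenvalues of nonpositive type): let λ∞ be an eigenvalue of nonpositive type of H, and for each n ≥ 1 let λ_n be an eigenvalue of nonpositive type of H_{[0,n]}. Then λ_n → λ∞ as n → ∞. -/
open MeasureTheory Complex Filter

/-- The (n+1)×(n+1) truncation H_{[0,n]} of the non-symmetric Jacobi matrix. -/
noncomputable def JacobiH0 (a b : ℕ → ℝ) (n : ℕ) : Matrix (Fin (n + 1)) (Fin (n + 1)) ℂ :=
  Matrix.of fun i j =>
    if (i : ℕ) = (j : ℕ) then (a i : ℂ)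
    else if (i : ℕ) + 1 = (j : ℕ) then (if (i : ℕ) = 0 then -(b 0 : ℂ) else (b (i : ℕ) : ℂ))
    else if (j : ℕ) + 1 = (i : ℕ) then (b (j : ℕ) : ℂ)
    else 0

/-- The n×n truncation H_{[1,n]} of the symmetric Jacobi matrix (entries shifted by one). -/
noncomputable def JacobiH1 (a b : ℕ → ℝ) (n : ℕ) : Matrix (Fin n) (Fin n) ℂ :=
  Matrix.of fun i j =>
    if (i : ℕ) = (j : ℕ) then (a ((i : ℕ) + 1) : ℂ)
    else if (i : ℕ) + 1 = (j : ℕ) then (b ((i : ℕ) + 1) : ℂ)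
    else if (j : ℕ) + 1 = (i : ℕ) then (b ((j : ℕ) + 1) : ℂ)
    else 0

/-- `lam` is an eigenvalue of nonpositive type of H_{[0,n]}. -/
def IsNPTev (a b : ℕ → ℝ) (n : ℕ) (lam : ℂ) : Prop :=
  0 ≤ lam.im ∧ ∃ f : Fin (n + 1) → ℂ, f ≠ 0 ∧ (JacobiH0 a b n).mulVec f = lam • f ∧
    -‖f 0‖ ^ 2 + ∑ j : Fin n, ‖f j.succ‖ ^ 2 ≤ 0

/-!
Normalise an eigenvector of `H_{[0,n]}` of nonpositive type so that `f₀ = 1`. Nonpositivity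
bounds every coordinate by `1`, and then the first row bounds the eigenvalue by `|a₀| + |b₀|`.
By compactness every subsequence has a further subsequence along which eigenvalues and
eigenvectors converge coordinatewise, and the limit is an eigenpair of nonpositive type of the
infinite recurrence. Such a pair is unique. Telescoping the Wronskian, which tends to `0` because
`b` is bounded, gives Green's identity `(μ - ν̄) [u, v] = 0` for the indefinite form
`[u, v] = -u₀ v̄₀ + ∑ₖ uₖ₊₁ v̄ₖ₊₁`. Either `μ = ν̄`, so both are real and equal, or `[u, v] = 0`,
which for two vectors of nonpositive type forces `∑ₖ |v₀ uₖ₊₁ - u₀ vₖ₊₁|² ≤ 0`; then `v₀ u₁ = u₀ v₁`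
and the first row gives `μ = ν`.
-/

open scoped ComplexConjugate

noncomputable def jacobiApply (a b : ℕ → ℝ) (u : ℕ → ℂ) : ℕ → ℂ
  | 0 => a 0 * u 0 - b 0 * u 1
  | k + 1 => b k * u k + a (k + 1) * u (k + 1) + b (k + 1) * u (k + 2)

def zeroExtend {n : ℕ} (f : Fin n → ℂ) : ℕ → ℂ := fun j => if h : j < n then f ⟨j, h⟩ else 0

/-- Phrased with partial sums, so that it carries square-summability with it and is closed under
coordinatewise limits. -/
def IsNonposType (u : ℕ → ℂ) : Prop :=
  ∀ m, ∑ j ∈ Finset.range m, ‖u (j + 1)‖ ^ 2 ≤ ‖u 0‖ ^ 2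

namespace IsNonposType

variable {u : ℕ → ℂ}

theorem summable_succ (hu : IsNonposType u) : Summable fun j => ‖u (j + 1)‖ ^ 2 :=
  summable_of_sum_range_le (fun _ => by positivity) hu

theorem summable (hu : IsNonposType u) : Summable fun j => ‖u j‖ ^ 2 :=
  (summable_nat_add_iff 1).1 hu.summable_succ

theorem tsum_le (hu : IsNonposType u) : ∑' j, ‖u (j + 1)‖ ^ 2 ≤ ‖u 0‖ ^ 2 :=
  hu.summable_succ.tsum_le_of_sum_range_le hu

theorem norm_le (hu : IsNonposType u) : ∀ j, ‖u j‖ ≤ ‖u 0‖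
  | 0 => le_rfl
  | j + 1 => by
    refine pow_le_pow_iff_left₀ (norm_nonneg _) (norm_nonneg _) two_ne_zero |>.1 ?_
    exact (Finset.single_le_sum (f := fun j => ‖u (j + 1)‖ ^ 2) (fun _ _ => by positivity)
      (Finset.self_mem_range_succ j)).trans (hu (j + 1))

theorem eq_zero_of_apply_zero (hu : IsNonposType u) (h0 : u 0 = 0) : u = 0 := by
  ext j
  simpa [h0] using hu.norm_le j

theorem smul (hu : IsNonposType u) (c : ℂ) : IsNonposType (c • u) := by
  intro m
  simp only [Pi.smul_apply, smul_eq_mul, norm_mul, mul_pow, ← Finset.mul_sum]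
  exact mul_le_mul_of_nonneg_left (hu m) (by positivity)

end IsNonposType

theorem isNonposType_of_tsum_le {u : ℕ → ℂ} (hu : Summable fun j => ‖u j‖ ^ 2)
    (h : ∑' j, ‖u (j + 1)‖ ^ 2 ≤ ‖u 0‖ ^ 2) : IsNonposType u := fun m =>
  (((summable_nat_add_iff 1).2 hu).sum_le_tsum _ fun _ _ => by positivity).trans h

theorem isClosed_setOf_isNonposType : IsClosed {u : ℕ → ℂ | IsNonposType u} := by
  simp only [IsNonposType, Set.ofPred_forall]
  exact isClosed_iInter fun m => isClosed_le (by fun_prop) (by fun_prop)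

section Jacobi

variable {a b : ℕ → ℝ}

theorem jacobiApply_smul (c : ℂ) (u : ℕ → ℂ) (i : ℕ) :
    jacobiApply a b (c • u) i = c * jacobiApply a b u i := by
  cases i <;> simp only [jacobiApply, Pi.smul_apply, smul_eq_mul] <;> ring

theorem continuous_jacobiApply (i : ℕ) : Continuous fun u : ℕ → ℂ => jacobiApply a b u i := by
  cases i <;> simp only [jacobiApply] <;> fun_prop

theorem jacobiH0_mulVec_apply {n : ℕ} (f : Fin (n + 1) → ℂ) (i : Fin (n + 1)) :
    (JacobiH0 a b n).mulVec f i = jacobiApply a b (zeroExtend f) i := by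
  obtain ⟨i, hi⟩ := i
  set F := zeroExtend f
  set E : ℕ → ℂ := fun j =>
    if i = j then (a i : ℂ)
    else if i + 1 = j then (if i = 0 then -(b 0 : ℂ) else (b i : ℂ))
    else if j + 1 = i then (b j : ℂ)
    else 0
  have hF : ∀ j ≥ n + 1, E j * F j = 0 := fun j hj => by
    simp [F, zeroExtend, show ¬j < n + 1 by omega]
  have hE : ∀ j ≥ i + 2, E j * F j = 0 := fun j hj => by
    simp [E, show i ≠ j by omega, show i + 1 ≠ j by omega, show j + 1 ≠ i by omega]
  -- row `i` vanishes beyond column `i + 1`, and `F` beyond `n`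
  have hsum : (JacobiH0 a b n).mulVec f ⟨i, hi⟩ = ∑ j ∈ Finset.range (i + 2), E j * F j := by
    rw [← Finset.eventually_constant_sum hE (by omega : i + 2 ≤ n + 1 + (i + 2)),
      Finset.eventually_constant_sum hF (by omega), ← Fin.sum_univ_eq_sum_range]
    simp [Matrix.mulVec, dotProduct, JacobiH0, E, F, zeroExtend, Fin.is_le]
  rw [hsum]
  rcases i with _ | k
  · simp [Finset.sum_range_succ, E, jacobiApply]
    ring
  · have hlow : ∑ j ∈ Finset.range k, E j * F j = 0 :=
      Finset.sum_eq_zero fun j hj => by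
        simp only [Finset.mem_range] at hj
        simp [E, show k + 1 ≠ j by omega, show k + 1 + 1 ≠ j by omega, show j ≠ k by omega]
    simp only [Finset.sum_range_succ, hlow]
    simp [E, jacobiApply, show k + 1 + 1 ≠ k by omega]

end Jacobi

theorem isNonposType_zeroExtend {n : ℕ} {f : Fin (n + 1) → ℂ}
    (hf : -‖f 0‖ ^ 2 + ∑ j : Fin n, ‖f j.succ‖ ^ 2 ≤ 0) : IsNonposType (zeroExtend f) := by
  intro m
  have hvanish : ∀ j ≥ n, ‖zeroExtend f (j + 1)‖ ^ 2 = 0 := fun j hj => by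
    simp [zeroExtend, show ¬j + 1 < n + 1 by omega]
  calc ∑ j ∈ Finset.range m, ‖zeroExtend f (j + 1)‖ ^ 2
      ≤ ∑ j ∈ Finset.range (m + n), ‖zeroExtend f (j + 1)‖ ^ 2 :=
        Finset.sum_le_sum_of_subset_of_nonneg (Finset.range_subset_range.2 (by omega))
          fun _ _ _ => by positivity
    _ = ∑ j : Fin n, ‖f j.succ‖ ^ 2 := by
        rw [Finset.eventually_constant_sum hvanish (by omega), ← Fin.sum_univ_eq_sum_range]
        simp [zeroExtend, Fin.succ]
    _ ≤ ‖zeroExtend f 0‖ ^ 2 := by simp [zeroExtend]; linarith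

theorem IsNPTev.exists_normalized_eigenvector {a b : ℕ → ℝ} {n : ℕ} {μ : ℂ}
    (h : IsNPTev a b n μ) :
    ∃ G : ℕ → ℂ, G 0 = 1 ∧ IsNonposType G ∧ ∀ i ≤ n, jacobiApply a b G i = μ * G i := by
  obtain ⟨-, f, hf0, hfμ, hfnp⟩ := h
  have hF := isNonposType_zeroExtend hfnp
  have hF0 : zeroExtend f 0 ≠ 0 := fun h0 => hf0 <| funext fun j => by
    simpa [zeroExtend, Fin.is_le] using congrFun (hF.eq_zero_of_apply_zero h0) j
  refine ⟨(zeroExtend f 0)⁻¹ • zeroExtend f, by simp [hF0], hF.smul _, fun i hi => ?_⟩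
  have hi' : i < n + 1 := by omega
  rw [jacobiApply_smul, ← jacobiH0_mulVec_apply f ⟨i, hi'⟩, hfμ]
  simp [zeroExtend, hi']
  ring

theorem norm_le_of_jacobiApply_zero {a b : ℕ → ℝ} {G : ℕ → ℂ} {μ : ℂ} (hG0 : G 0 = 1)
    (hG : IsNonposType G) (hμ : jacobiApply a b G 0 = μ * G 0) : ‖μ‖ ≤ |a 0| + |b 0| := by
  have hG1 : ‖G 1‖ ≤ 1 := by simpa [hG0] using hG.norm_le 1
  rw [hG0, mul_one] at hμ
  rw [← hμ, jacobiApply, hG0, mul_one]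
  calc ‖(a 0 : ℂ) - b 0 * G 1‖ ≤ ‖(a 0 : ℂ)‖ + ‖(b 0 : ℂ)‖ * ‖G 1‖ :=
        (norm_sub_le _ _).trans_eq (by rw [norm_mul])
    _ ≤ |a 0| + |b 0| := by
        rw [Complex.norm_real, Complex.norm_real, Real.norm_eq_abs, Real.norm_eq_abs]
        nlinarith [abs_nonneg (b 0)]

theorem lp.summable_norm_sq {ι : Type*} {E : ι → Type*} [∀ i, NormedAddCommGroup (E i)]
    (f : lp E 2) : Summable fun i => ‖f i‖ ^ 2 := by
  simpa using (memℓp_gen_iff (by norm_num : 0 < (2 : ENNReal).toReal)).1 (lp.memℓp f)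

theorem tendsto_zero_of_summable_norm_sq {u : ℕ → ℂ} (hu : Summable fun j => ‖u j‖ ^ 2) :
    Tendsto u atTop (nhds 0) := by
  rw [tendsto_zero_iff_norm_tendsto_zero]
  simpa [Real.sqrt_sq (norm_nonneg _)] using hu.tendsto_atTop_zero.sqrt

theorem summable_mul_conj_of_summable_norm_sq {u v : ℕ → ℂ}
    (hu : Summable fun j => ‖u j‖ ^ 2) (hv : Summable fun j => ‖v j‖ ^ 2) :
    Summable fun j => u j * conj (v j) :=
  .of_norm_bounded ((hu.add hv).div_const 2) fun j => by
    rw [norm_mul, Complex.norm_conj]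
    nlinarith [two_mul_le_add_sq ‖u j‖ ‖v j‖]

noncomputable def kreinInner (u v : ℕ → ℂ) : ℂ :=
  ∑' k, u (k + 1) * conj (v (k + 1)) - u 0 * conj (v 0)

noncomputable def jacobiWronskian (b : ℕ → ℝ) (u v : ℕ → ℂ) (k : ℕ) : ℂ :=
  b k * (u k * conj (v (k + 1)) - u (k + 1) * conj (v k))

section Green

variable {a b : ℕ → ℝ} {u v : ℕ → ℂ} {μ ν : ℂ}

theorem jacobiWronskian_sub_succ {k : ℕ} (hu : jacobiApply a b u (k + 1) = μ * u (k + 1))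
    (hv : jacobiApply a b v (k + 1) = ν * v (k + 1)) :
    jacobiWronskian b u v k - jacobiWronskian b u v (k + 1)
      = (μ - conj ν) * (u (k + 1) * conj (v (k + 1))) := by
  have hv' := congrArg conj hv
  simp only [jacobiApply, map_add, map_mul, Complex.conj_ofReal] at hu hv'
  simp only [jacobiWronskian]
  linear_combination conj (v (k + 1)) * hu - u (k + 1) * hv'

theorem jacobiWronskian_zero (hu : jacobiApply a b u 0 = μ * u 0)
    (hv : jacobiApply a b v 0 = ν * v 0) :
    jacobiWronskian b u v 0 = (μ - conj ν) * (u 0 * conj (v 0)) := by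
  have hv' := congrArg conj hv
  simp only [jacobiApply, map_sub, map_mul, Complex.conj_ofReal] at hu hv'
  simp only [jacobiWronskian]
  linear_combination conj (v 0) * hu - u 0 * hv'

theorem tendsto_jacobiWronskian {C : ℝ} (hC : ∀ j, |b j| ≤ C) (hu : Tendsto u atTop (nhds 0))
    (hv : Tendsto v atTop (nhds 0)) : Tendsto (jacobiWronskian b u v) atTop (nhds 0) := by
  have hconj : Tendsto (fun k => conj (v k)) atTop (nhds 0) := by
    simpa [Function.comp_def] using (Complex.continuous_conj.tendsto 0).comp hv
  have hw : Tendsto (fun k => u k * conj (v (k + 1)) - u (k + 1) * conj (v k)) atTop (nhds 0) := by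
    simpa using (hu.mul (hconj.comp (tendsto_add_atTop_nat 1))).sub
      ((hu.comp (tendsto_add_atTop_nat 1)).mul hconj)
  refine squeeze_zero_norm (fun k => ?_) (by simpa using hw.norm.const_mul C)
  rw [jacobiWronskian, norm_mul, Complex.norm_real, Real.norm_eq_abs]
  exact mul_le_mul_of_nonneg_right (hC k) (norm_nonneg _)

theorem mul_kreinInner_eq_zero {C : ℝ} (hC : ∀ j, |b j| ≤ C)
    (hu : Summable fun j => ‖u j‖ ^ 2) (hv : Summable fun j => ‖v j‖ ^ 2)
    (hμu : ∀ i, jacobiApply a b u i = μ * u i) (hνv : ∀ i, jacobiApply a b v i = ν * v i) :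
    (μ - conj ν) * kreinInner u v = 0 := by
  have hsum := ((summable_nat_add_iff 1).2 (summable_mul_conj_of_summable_norm_sq hu hv)
    ).hasSum.tendsto_sum_nat.const_mul (μ - conj ν)
  have htel : ∀ N, (μ - conj ν) * ∑ k ∈ Finset.range N, u (k + 1) * conj (v (k + 1))
      = jacobiWronskian b u v 0 - jacobiWronskian b u v N := fun N => by
    rw [Finset.mul_sum, ← Finset.sum_range_sub']
    exact Finset.sum_congr rfl fun k _ => (jacobiWronskian_sub_succ (hμu _) (hνv _)).symm
  have hlim : Tendsto (fun N => (μ - conj ν) * ∑ k ∈ Finset.range N, u (k + 1) * conj (v (k + 1)))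
      atTop (nhds (jacobiWronskian b u v 0)) := by
    simpa [htel] using tendsto_const_nhds.sub (tendsto_jacobiWronskian hC
      (tendsto_zero_of_summable_norm_sq hu) (tendsto_zero_of_summable_norm_sq hv))
  rw [kreinInner, mul_sub, tendsto_nhds_unique hsum hlim, jacobiWronskian_zero (hμu 0) (hνv 0),
    sub_self]

end Green

theorem IsNonposType.mul_eq_mul_of_kreinInner_eq_zero {u v : ℕ → ℂ} (hu : IsNonposType u)
    (hv : IsNonposType v) (huv : kreinInner u v = 0) (k : ℕ) :
    v 0 * u (k + 1) = u 0 * v (k + 1) := by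
  set T := ∑' k, u (k + 1) * conj (v (k + 1))
  have hT : T = u 0 * conj (v 0) := sub_eq_zero.1 huv
  have hexpand : ∀ k, ‖v 0 * u (k + 1) - u 0 * v (k + 1)‖ ^ 2
      = ‖v 0‖ ^ 2 * ‖u (k + 1)‖ ^ 2 + ‖u 0‖ ^ 2 * ‖v (k + 1)‖ ^ 2
        - 2 * (v 0 * conj (u 0) * (u (k + 1) * conj (v (k + 1)))).re := fun k => by
    simp only [Complex.sq_norm, Complex.normSq_apply, Complex.mul_re, Complex.mul_im,
      Complex.sub_re, Complex.sub_im, Complex.conj_re, Complex.conj_im]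
    ring
  have hsum : HasSum (fun k => ‖v 0 * u (k + 1) - u 0 * v (k + 1)‖ ^ 2)
      (‖v 0‖ ^ 2 * ∑' k, ‖u (k + 1)‖ ^ 2 + ‖u 0‖ ^ 2 * ∑' k, ‖v (k + 1)‖ ^ 2
        - 2 * (v 0 * conj (u 0) * T).re) := by
    simp only [hexpand]
    exact ((hu.summable_succ.hasSum.mul_left _).add (hv.summable_succ.hasSum.mul_left _)).sub
      ((Complex.hasSum_re (((summable_nat_add_iff 1).2
        (summable_mul_conj_of_summable_norm_sq hu.summable hv.summable)).hasSum.mul_left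
          (v 0 * conj (u 0)))).mul_left 2)
  have hre : (v 0 * conj (u 0) * T).re = ‖u 0‖ ^ 2 * ‖v 0‖ ^ 2 := by
    rw [hT, show v 0 * conj (u 0) * (u 0 * conj (v 0)) = u 0 * conj (u 0) * (v 0 * conj (v 0))
      by ring, RCLike.mul_conj, RCLike.mul_conj]
    norm_cast
  have hle : ‖v 0 * u (k + 1) - u 0 * v (k + 1)‖ ^ 2 ≤ 0 := by
    refine (le_hasSum hsum k fun _ _ => by positivity).trans ?_
    rw [hre]
    nlinarith [mul_le_mul_of_nonneg_left hu.tsum_le (sq_nonneg ‖v 0‖),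
      mul_le_mul_of_nonneg_left hv.tsum_le (sq_nonneg ‖u 0‖)]
  exact sub_eq_zero.1 (norm_eq_zero.1 (pow_eq_zero_iff two_ne_zero |>.1
    (le_antisymm hle (by positivity))))

theorem eigenvalue_eq_of_isNonposType {a b : ℕ → ℝ} {C : ℝ} (hC : ∀ j, |b j| ≤ C) {u v : ℕ → ℂ}
    {μ ν : ℂ} (hu : IsNonposType u) (hv : IsNonposType v) (hu0 : u 0 ≠ 0) (hv0 : v 0 ≠ 0)
    (hμ : 0 ≤ μ.im) (hν : 0 ≤ ν.im) (hμu : ∀ i, jacobiApply a b u i = μ * u i)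
    (hνv : ∀ i, jacobiApply a b v i = ν * v i) : μ = ν := by
  rcases mul_eq_zero.1 (mul_kreinInner_eq_zero hC hu.summable hv.summable hμu hνv) with h | h
  · have h' : μ = conj ν := sub_eq_zero.1 h
    have hμν : μ.im = -ν.im := by rw [h', Complex.conj_im]
    apply Complex.ext
    · rw [h', Complex.conj_re]
    · linarith
  · have h1 := hu.mul_eq_mul_of_kreinInner_eq_zero hv h 0
    have hu0' := hμu 0
    have hv0' := hνv 0
    simp only [jacobiApply] at hu0' hv0'
    have : (μ - ν) * (u 0 * v 0) = 0 := by
      linear_combination u 0 * hv0' - v 0 * hu0' - b 0 * h1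
    exact sub_eq_zero.1 ((mul_eq_zero.1 this).resolve_right (mul_ne_zero hu0 hv0))

theorem exists_subseq_tendsto_of_isNonposType {a b : ℕ → ℝ} {lam : ℕ → ℂ} {G : ℕ → ℕ → ℂ}
    (him : ∀ n, 0 ≤ (lam n).im) (hG0 : ∀ n, G n 0 = 1) (hG : ∀ n, IsNonposType (G n))
    (hrows : ∀ n, ∀ i ≤ n, jacobiApply a b (G n) i = lam n * G n i)
    {ns : ℕ → ℕ} (hns : Tendsto ns atTop atTop) :
    ∃ μ h, 0 ≤ μ.im ∧ h 0 = 1 ∧ IsNonposType h ∧ (∀ i, jacobiApply a b h i = μ * h i) ∧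
      ∃ φ : ℕ → ℕ, Tendsto (fun k => lam (ns (φ k))) atTop (nhds μ) := by
  set x : ℕ → ℂ × (ℕ → ℂ) := fun k => (lam (ns k), G (ns k))
  set K := Metric.closedBall (0 : ℂ) (|a 0| + |b 0|) ×ˢ
    Set.univ.pi fun _ : ℕ => Metric.closedBall (0 : ℂ) 1
  have hK : IsCompact K :=
    (isCompact_closedBall _ _).prod (isCompact_univ_pi fun _ => isCompact_closedBall _ _)
  have hx : ∀ k, x k ∈ K := fun k =>
    ⟨mem_closedBall_zero_iff.2 <|
        norm_le_of_jacobiApply_zero (hG0 _) (hG _) (hrows _ 0 (Nat.zero_le _)),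
      fun j _ => mem_closedBall_zero_iff.2 <| by simpa [hG0] using (hG (ns k)).norm_le j⟩
  obtain ⟨⟨μ, h⟩, -, φ, hφ, hlim⟩ := hK.tendsto_subseq hx
  have hmem : ∀ s : Set (ℂ × (ℕ → ℂ)), IsClosed s → (∀ᶠ k in atTop, x (φ k) ∈ s) → (μ, h) ∈ s :=
    fun s hs hev => hs.mem_of_tendsto hlim hev
  refine ⟨μ, h, hmem {p | 0 ≤ p.1.im} ?_ (.of_forall fun k => him _),
    hmem {p | p.2 0 = 1} ?_ (.of_forall fun k => hG0 _),
    hmem {p | IsNonposType p.2} ?_ (.of_forall fun k => hG _),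
    fun i => hmem {p | jacobiApply a b p.2 i = p.1 * p.2 i} ?_ ?_,
    φ, (continuous_fst.tendsto _).comp hlim⟩
  · exact isClosed_le continuous_const (by fun_prop)
  · exact isClosed_eq (by fun_prop) continuous_const
  · exact isClosed_setOf_isNonposType.preimage continuous_snd
  · exact isClosed_eq ((continuous_jacobiApply i).comp continuous_snd) (by fun_prop)
  · filter_upwards [(hns.comp hφ.tendsto_atTop).eventually_ge_atTop i] with k hk
    exact hrows _ i hk

theorem stmt_8_general
    (a b : ℕ → ℝ) (hbbd : ∃ C : ℝ, ∀ j, |b j| ≤ C)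
    (H : lp (fun _ : ℕ => ℂ) 2 →L[ℂ] lp (fun _ : ℕ => ℂ) 2)
    (hH0 : ∀ x : lp (fun _ : ℕ => ℂ) 2,
      (H x : ∀ _ : ℕ, ℂ) 0 = (a 0 : ℂ) * (x : ∀ _ : ℕ, ℂ) 0 - (b 0 : ℂ) * (x : ∀ _ : ℕ, ℂ) 1)
    (hHk : ∀ x : lp (fun _ : ℕ => ℂ) 2, ∀ k : ℕ,
      (H x : ∀ _ : ℕ, ℂ) (k + 1) = (b k : ℂ) * (x : ∀ _ : ℕ, ℂ) k
        + (a (k + 1) : ℂ) * (x : ∀ _ : ℕ, ℂ) (k + 1) + (b (k + 1) : ℂ) * (x : ∀ _ : ℕ, ℂ) (k + 2))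
    (lamInf : ℂ) (hlamInf : 0 ≤ lamInf.im ∧ ∃ f : lp (fun _ : ℕ => ℂ) 2, f ≠ 0 ∧
      H f = lamInf • f ∧
      -‖(f : ∀ _ : ℕ, ℂ) 0‖ ^ 2 + ∑' j : ℕ, ‖(f : ∀ _ : ℕ, ℂ) (j + 1)‖ ^ 2 ≤ 0)
    (lam : ℕ → ℂ) (hlam : ∀ n : ℕ, 1 ≤ n → IsNPTev a b n (lam n)) :
    Tendsto lam atTop (nhds lamInf) := by
  obtain ⟨C, hC⟩ := hbbd
  obtain ⟨hν, f, hf, hHf, hfnp⟩ := hlamInf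
  have hfν : ∀ i, jacobiApply a b f i = lamInf * f i := by
    rintro (_ | k)
    · rw [jacobiApply, ← hH0, hHf, lp.coeFn_smul, Pi.smul_apply, smul_eq_mul]
    · rw [jacobiApply, ← hHk, hHf, lp.coeFn_smul, Pi.smul_apply, smul_eq_mul]
  have hf' : IsNonposType f := isNonposType_of_tsum_le (lp.summable_norm_sq f) (by linarith)
  have hf0 : f 0 ≠ 0 := fun h0 => hf (lp.ext (hf'.eq_zero_of_apply_zero h0))
  rw [← tendsto_add_atTop_iff_nat 1]
  choose G hG0 hG hrows using fun n => (hlam (n + 1) le_add_self).exists_normalized_eigenvector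
  refine tendsto_of_subseq_tendsto fun ns hns => ?_
  obtain ⟨μ, h, hμ, hh0, hh, hμh, φ, hφ⟩ := exists_subseq_tendsto_of_isNonposType
    (fun n => (hlam (n + 1) le_add_self).1) hG0 hG (fun n i hi => hrows n i (by omega)) hns
  exact ⟨φ, eigenvalue_eq_of_isNonposType hC hh hf' (by simp [hh0]) hf0 hμ hν hμh hfν ▸ hφ⟩

/-- Corollary 1: convergence of the eigenvalues of nonpositive type. -/
theorem stmt_8
    (a b : ℕ → ℝ) (ha : ∃ C : ℝ, ∀ j, |a j| ≤ C) (hbbd : ∃ C : ℝ, ∀ j, |b j| ≤ C)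
    (hb : ∀ j, 0 < b j)
    (H : lp (fun _ : ℕ => ℂ) 2 →L[ℂ] lp (fun _ : ℕ => ℂ) 2)
    (hH0 : ∀ x : lp (fun _ : ℕ => ℂ) 2,
      (H x : ∀ _ : ℕ, ℂ) 0 = (a 0 : ℂ) * (x : ∀ _ : ℕ, ℂ) 0 - (b 0 : ℂ) * (x : ∀ _ : ℕ, ℂ) 1)
    (hHk : ∀ x : lp (fun _ : ℕ => ℂ) 2, ∀ k : ℕ,
      (H x : ∀ _ : ℕ, ℂ) (k + 1) = (b k : ℂ) * (x : ∀ _ : ℕ, ℂ) k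
        + (a (k + 1) : ℂ) * (x : ∀ _ : ℕ, ℂ) (k + 1) + (b (k + 1) : ℂ) * (x : ∀ _ : ℕ, ℂ) (k + 2))
    (lamInf : ℂ) (hlamInf : 0 ≤ lamInf.im ∧ ∃ f : lp (fun _ : ℕ => ℂ) 2, f ≠ 0 ∧
      H f = lamInf • f ∧
      -‖(f : ∀ _ : ℕ, ℂ) 0‖ ^ 2 + ∑' j : ℕ, ‖(f : ∀ _ : ℕ, ℂ) (j + 1)‖ ^ 2 ≤ 0)
    (lam : ℕ → ℂ) (hlam : ∀ n : ℕ, 1 ≤ n → IsNPTev a b n (lam n)) :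
    Tendsto lam atTop (nhds lamInf) :=
  stmt_8_general a b hbbd H hH0 hHk lamInf hlamInf lam hlam
end

section
/- Pontryagin structure of the truncations: for every n ≥ 1, the characteristic polynomial of the matrix H_{[0,n]} has at most two roots (counted with multiplicity) that do not lie on the real axis. -/
open MeasureTheory Complex Filter

/-!
The matrix `H = H_{[0,n]}` is real and selfadjoint for the indefinite form `[x, y] = ⟨x, J y⟩`
with `J = diag(-1, 1, …, 1)`, i.e. `Hᴴ J = J H`. For a `[·,·]`-selfadjoint operator the root
subspaces of `λ` and `μ` are `[·,·]`-orthogonal unless `μ = conj λ`, so for two eigenvalues in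
the same open half-plane the sum of their root subspaces is neutral. Since `J` has a single
negative square, a neutral subspace is at most one-dimensional: on `{x | x 0 = 0}` the form is
positive definite, so `x ↦ x 0` is injective on it. As the root subspace of `λ` has dimension
equal to the multiplicity of `λ`, each open half-plane contains at most one eigenvalue counted
with multiplicity.
-/

open ComplexConjugate Matrix Module Module.End

section RootSubspaces

variable {V : Type*} [AddCommGroup V] [Module ℂ V] (B : V →ₗ⋆[ℂ] V →ₗ[ℂ] ℂ) {φ : End ℂ V}

theorem sesq_eq_zero_of_pow_sub_smul_apply_eq_zero (hφ : ∀ x y, B (φ x) y = B x (φ y))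
    {lam mu : ℂ} (h : conj lam ≠ mu) :
    ∀ (p q : ℕ) (x y : V), ((φ - lam • 1) ^ p) x = 0 → ((φ - mu • 1) ^ q) y = 0 → B x y = 0 := by
  intro p
  induction p with
  | zero => intro q x y hx _; simp_all
  | succ p ihp =>
    intro q
    induction q with
    | zero => intro x y _ hy; simp_all
    | succ q ihq =>
      intro x y hx hy
      have hx' : B ((φ - lam • 1) x) y = 0 :=
        ihp (q + 1) _ y (by rwa [← Module.End.mul_apply, ← pow_succ]) hy
      have hy' : B x ((φ - mu • 1) y) = 0 :=
        ihq x _ hx (by rwa [← Module.End.mul_apply, ← pow_succ])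
      have key : (conj lam - mu) * B x y = B x ((φ - mu • 1) y) - B ((φ - lam • 1) x) y := by
        simp only [LinearMap.sub_apply, LinearMap.smul_apply, End.one_apply, map_sub, map_smul,
          smul_eq_mul, LinearMap.map_smulₛₗ, hφ, sub_sub_sub_cancel_left]
        ring
      rw [hx', hy', sub_zero] at key
      exact (mul_eq_zero.mp key).resolve_left (sub_ne_zero.mpr h)

theorem sesq_eq_zero_of_mem_maxGenEigenspace (hφ : ∀ x y, B (φ x) y = B x (φ y))
    {lam mu : ℂ} (h : conj lam ≠ mu) {x y : V} (hx : x ∈ φ.maxGenEigenspace lam)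
    (hy : y ∈ φ.maxGenEigenspace mu) : B x y = 0 := by
  obtain ⟨p, hp⟩ := (mem_maxGenEigenspace φ lam x).mp hx
  obtain ⟨q, hq⟩ := (mem_maxGenEigenspace φ mu y).mp hy
  exact sesq_eq_zero_of_pow_sub_smul_apply_eq_zero B hφ h p q x y hp hq

theorem sesq_self_eq_zero_of_mem_sup_maxGenEigenspace (hφ : ∀ x y, B (φ x) y = B x (φ y))
    {P : ℂ → Prop} (hP : ∀ z w, P z → P w → conj z ≠ w) {lam mu : ℂ} (hlam : P lam) (hmu : P mu)
    {x : V} (hx : x ∈ φ.maxGenEigenspace lam ⊔ φ.maxGenEigenspace mu) : B x x = 0 := by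
  obtain ⟨u, hu, v, hv, rfl⟩ := Submodule.mem_sup.mp hx
  have orth : ∀ {z w : ℂ} {x y : V}, P z → P w → x ∈ φ.maxGenEigenspace z →
      y ∈ φ.maxGenEigenspace w → B x y = 0 := fun hz hw =>
    sesq_eq_zero_of_mem_maxGenEigenspace B hφ (hP _ _ hz hw)
  simp only [map_add, LinearMap.add_apply, orth hlam hlam hu hu, orth hlam hmu hu hv,
    orth hmu hlam hv hu, orth hmu hmu hv hv, add_zero]

end RootSubspaces

theorem Module.End.two_le_finrank_sup_maxGenEigenspace {K V : Type*} [Field K] [AddCommGroup V]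
    [Module K V] [FiniteDimensional K V] {φ : End K V} {lam mu : K}
    (h : lam ::ₘ {mu} ≤ φ.charpoly.roots) :
    2 ≤ finrank K ↥(φ.maxGenEigenspace lam ⊔ φ.maxGenEigenspace mu) := by
  classical
  rcases eq_or_ne lam mu with rfl | hne
  · rw [sup_idem, LinearMap.finrank_maxGenEigenspace_eq, ← Polynomial.count_roots]
    simpa using Multiset.count_le_of_le lam h
  · have hdisj : Disjoint (φ.maxGenEigenspace lam) (φ.maxGenEigenspace mu) :=
      φ.independent_maxGenEigenspace.pairwiseDisjoint hne
    have hpos : ∀ z ∈ φ.charpoly.roots, 1 ≤ finrank K ↥(φ.maxGenEigenspace z) := fun z hz => by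
      rw [LinearMap.finrank_maxGenEigenspace_eq, ← Polynomial.count_roots]
      exact Multiset.one_le_count_iff_mem.mpr hz
    have hdim := Submodule.finrank_sup_add_finrank_inf_eq (φ.maxGenEigenspace lam)
      (φ.maxGenEigenspace mu)
    rw [hdisj.eq_bot, finrank_bot] at hdim
    have h1 := hpos lam (Multiset.mem_of_le h (by simp))
    have h2 := hpos mu (Multiset.mem_of_le h (by simp))
    omega

section SignatureForm

variable {m : ℕ}

noncomputable def signatureMatrix (m : ℕ) : Matrix (Fin (m + 1)) (Fin (m + 1)) ℂ :=
  diagonal (Fin.cons (-1) 1)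

noncomputable def signatureForm (m : ℕ) :
    (Fin (m + 1) → ℂ) →ₗ⋆[ℂ] (Fin (m + 1) → ℂ) →ₗ[ℂ] ℂ :=
  toLinearMapₛₗ₂' ℂ (starRingEnd ℂ) (RingHom.id ℂ) (signatureMatrix m)

theorem signatureForm_apply (x y : Fin (m + 1) → ℂ) :
    signatureForm m x y = star x ⬝ᵥ (signatureMatrix m *ᵥ y) := by
  simp [signatureForm, signatureMatrix, toLinearMapₛₗ₂'_apply, dotProduct, mulVec_diagonal,
    diagonal_apply, mul_comm, mul_left_comm]

theorem signatureForm_self (x : Fin (m + 1) → ℂ) :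
    signatureForm m x x = ((-‖x 0‖ ^ 2 + ∑ j : Fin m, ‖x j.succ‖ ^ 2 : ℝ) : ℂ) := by
  simp [signatureForm_apply, dotProduct, signatureMatrix, mulVec_diagonal, Fin.sum_univ_succ,
    Complex.mul_conj', mul_comm]

theorem eq_zero_of_signatureForm_self_eq_zero {x : Fin (m + 1) → ℂ} (h0 : x 0 = 0)
    (hx : signatureForm m x x = 0) : x = 0 := by
  rw [signatureForm_self, h0, norm_zero, Complex.ofReal_eq_zero] at hx
  have hsucc : ∀ j : Fin m, x j.succ = 0 := fun j => by
    simpa using (Finset.sum_eq_zero_iff_of_nonneg fun j _ => sq_nonneg ‖x j.succ‖).mp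
      (by simpa using hx) j (Finset.mem_univ j)
  funext i
  cases i using Fin.cases with
  | zero => exact h0
  | succ j => exact hsucc j

theorem finrank_le_one_of_signatureForm_self_eq_zero (W : Submodule ℂ (Fin (m + 1) → ℂ))
    (hW : ∀ x ∈ W, signatureForm m x x = 0) : finrank ℂ W ≤ 1 := by
  let head : W →ₗ[ℂ] ℂ := (LinearMap.proj 0).comp W.subtype
  have head_injective : Function.Injective head := by
    rw [← LinearMap.ker_eq_bot, Submodule.eq_bot_iff]
    rintro ⟨x, hxW⟩ hx
    exact Subtype.ext (eq_zero_of_signatureForm_self_eq_zero hx (hW x hxW))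
  simpa using LinearMap.finrank_le_finrank_of_injective head_injective

theorem signatureForm_mulVec {M : Matrix (Fin (m + 1)) (Fin (m + 1)) ℂ}
    (hM : Mᴴ * signatureMatrix m = signatureMatrix m * M) (x y : Fin (m + 1) → ℂ) :
    signatureForm m (M *ᵥ x) y = signatureForm m x (M *ᵥ y) := by
  rw [signatureForm_apply, signatureForm_apply, star_mulVec, ← dotProduct_mulVec, mulVec_mulVec,
    hM, ← mulVec_mulVec]

end SignatureForm

theorem card_filter_roots_charpoly_le_one {m : ℕ} {M : Matrix (Fin (m + 1)) (Fin (m + 1)) ℂ}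
    (hM : Mᴴ * signatureMatrix m = signatureMatrix m * M) (P : ℂ → Prop) [DecidablePred P]
    (hP : ∀ z w, P z → P w → conj z ≠ w) :
    (M.charpoly.roots.filter P).card ≤ 1 := by
  by_contra! hcard
  obtain ⟨lam, hlam⟩ := Multiset.card_pos_iff_exists_mem.mp (zero_lt_one.trans hcard)
  obtain ⟨t, ht⟩ := Multiset.exists_cons_of_mem hlam
  obtain ⟨mu, hmu⟩ := Multiset.card_pos_iff_exists_mem.mp
    (by rw [ht, Multiset.card_cons] at hcard; omega : 0 < t.card)
  have hpair : lam ::ₘ {mu} ≤ M.charpoly.roots.filter P := by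
    rw [ht, Multiset.cons_le_cons_iff, Multiset.singleton_le]
    exact hmu
  have hPlam := Multiset.of_mem_filter hlam
  have hPmu := Multiset.of_mem_filter
    (Multiset.mem_of_le hpair (Multiset.mem_cons_of_mem (Multiset.mem_singleton_self mu)))
  have hadj : ∀ x y, signatureForm m (toLin' M x) y = signatureForm m x (toLin' M y) := by
    simpa only [toLin'_apply] using signatureForm_mulVec hM
  have two_le := two_le_finrank_sup_maxGenEigenspace (φ := toLin' M)
    (by simpa only [Matrix.charpoly_toLin'] using hpair.trans (Multiset.filter_le P _))
  have le_one := finrank_le_one_of_signatureForm_self_eq_zero _ fun x hx =>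
    sesq_self_eq_zero_of_mem_sup_maxGenEigenspace _ hadj hP hPlam hPmu hx
  omega

theorem JacobiH0_conjTranspose_mul_signatureMatrix (a b : ℕ → ℝ) (n : ℕ) :
    (JacobiH0 a b n)ᴴ * signatureMatrix n = signatureMatrix n * JacobiH0 a b n := by
  ext i j
  simp only [signatureMatrix, mul_diagonal, diagonal_mul, conjTranspose_apply, JacobiH0, of_apply]
  cases i using Fin.cases <;> cases j using Fin.cases <;>
    simp only [Fin.val_zero, Fin.val_succ, Fin.cons_zero, Fin.cons_succ, Pi.one_apply] <;>
    split_ifs <;> first | omega | simp_all [Complex.conj_ofReal]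

theorem stmt_14_general (a b : ℕ → ℝ) (n : ℕ) :
    (Multiset.filter (fun z => z.im ≠ 0) (JacobiH0 a b n).charpoly.roots).card ≤ 2 := by
  have hM := JacobiH0_conjTranspose_mul_signatureMatrix a b n
  have upper := card_filter_roots_charpoly_le_one hM (fun z => 0 < z.im)
    fun z w hz hw hzw => by rw [← hzw, conj_im] at hw; linarith
  have lower := card_filter_roots_charpoly_le_one hM (fun z => z.im < 0)
    fun z w hz hw hzw => by rw [← hzw, conj_im] at hw; linarith
  set roots := (JacobiH0 a b n).charpoly.roots
  have split : roots.filter (fun z => z.im ≠ 0) =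
      roots.filter (fun z => 0 < z.im) + roots.filter (fun z => z.im < 0) := by
    rw [Multiset.filter_add_filter,
      (Multiset.filter_eq_nil (p := fun z : ℂ => 0 < z.im ∧ z.im < 0)).mpr
        fun z _ h => h.1.not_gt h.2,
      add_zero]
    exact Multiset.filter_congr fun z _ => ne_iff_lt_or_gt.trans or_comm
  rw [split, Multiset.card_add]
  omega

/-- Pontryagin structure of the truncations: at most two non-real roots of the
characteristic polynomial, counted with multiplicity. -/
theorem stmt_14 (a b : ℕ → ℝ) (hb : ∀ j, 0 < b j) (n : ℕ) (hn : 1 ≤ n) :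
    (Multiset.filter (fun z => z.im ≠ 0) (JacobiH0 a b n).charpoly.roots).card ≤ 2 :=
  stmt_14_general a b n
end

section
/- Existence and uniqueness of the eigenvalue of nonpositive type of a truncation: for every n ≥ 1 there exists exactly one complex number λ with Im λ ≥ 0 for which there is a nonzero f ∈ ℂ^{n+1} with H_{[0,n]} f = λ f and −|f_0|² + Σ_{j=1}^{n} |f_j|² ≤ 0. -/
open MeasureTheory Complex Filter

/-!
`H = H_{[0,n]}` is selfadjoint for the indefinite inner product
`[f, g] = -f₀ ḡ₀ + ∑_{j ≥ 1} f_j ḡ_j`, because `diag(-1, 1, …, 1) H` is real symmetric; this is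
Pontryagin's theorem for a space with one negative square.

Existence: suppose every eigenvector with `Im λ ≥ 0` is positive. Eigenvectors of nonreal
eigenvalues are neutral and nonreal eigenvalues come in conjugate pairs, so the spectrum is real.
A Jordan chain `(H - λ) y = v` would make the eigenvector `v` neutral, so generalized eigenvectors
are eigenvectors; eigenspaces of distinct real eigenvalues are orthogonal, so `[·, ·]` would be
positive semidefinite, contradicting `[e₀, e₀] = -1`.

Uniqueness: for `λ, μ` in the closed upper half-plane with `λ ≠ μ̄`, eigenvectors `f, g` of
nonpositive type are orthogonal, so `g₀ f - f₀ g` is of nonpositive type with vanishing `0`-th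
coordinate, hence zero; thus `f` and `g` are proportional and `λ = μ`.
-/

open Matrix Module ComplexConjugate

section IndefiniteForm

variable {n : ℕ}

def indefSign (i : Fin (n + 1)) : ℂ := if i = 0 then -1 else 1

lemma indefSign_mul_self (i : Fin (n + 1)) : indefSign i * indefSign i = 1 := by
  unfold indefSign; split_ifs <;> norm_num

lemma star_indefSign (i : Fin (n + 1)) : star (indefSign i) = indefSign i := by
  unfold indefSign; split_ifs <;> simp

variable (n) in
noncomputable def indefForm : (Fin (n + 1) → ℂ) →ₗ[ℂ] (Fin (n + 1) → ℂ) →ₗ⋆[ℂ] ℂ :=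
  LinearMap.mk₂'ₛₗ (RingHom.id ℂ) (starRingEnd ℂ)
    (fun f g => ∑ i, indefSign i * f i * star (g i))
    (fun f f' g => by
      simp only [Pi.add_apply, ← Finset.sum_add_distrib]
      exact Finset.sum_congr rfl fun i _ => by ring)
    (fun c f g => by
      simp only [Pi.smul_apply, smul_eq_mul, Finset.mul_sum, RingHom.id_apply]
      exact Finset.sum_congr rfl fun i _ => by ring)
    (fun f g g' => by
      simp only [Pi.add_apply, star_add, ← Finset.sum_add_distrib]
      exact Finset.sum_congr rfl fun i _ => by ring)
    (fun c f g => by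
      simp only [Pi.smul_apply, smul_eq_mul, star_mul', Finset.mul_sum]
      exact Finset.sum_congr rfl fun i _ => by simp; ring)

lemma indefForm_apply (f g : Fin (n + 1) → ℂ) :
    indefForm n f g = ∑ i, indefSign i * f i * star (g i) := rfl

noncomputable def signedNormSq (f : Fin (n + 1) → ℂ) : ℝ :=
  -‖f 0‖ ^ 2 + ∑ j : Fin n, ‖f j.succ‖ ^ 2

lemma indefForm_self (f : Fin (n + 1) → ℂ) : indefForm n f f = signedNormSq f := by
  simp [indefForm_apply, signedNormSq, Fin.sum_univ_succ, indefSign, Complex.mul_conj']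

lemma indefForm_nondegenerate {v : Fin (n + 1) → ℂ} (hv : v ≠ 0) :
    indefForm n (fun i => indefSign i * v i) v ≠ 0 := by
  obtain ⟨i, hi⟩ := Function.ne_iff.mp hv
  have hsum : indefForm n (fun i => indefSign i * v i) v = ((∑ i, ‖v i‖ ^ 2 : ℝ) : ℂ) := by
    simp only [indefForm_apply, ← mul_assoc, indefSign_mul_self, one_mul]
    push_cast
    exact Finset.sum_congr rfl fun i _ => by simp [Complex.mul_conj']
  rw [hsum, Complex.ofReal_ne_zero]
  refine (Finset.sum_pos' (fun j _ => by positivity) ⟨i, Finset.mem_univ i, ?_⟩).ne'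
  exact pow_pos (norm_pos_iff.mpr hi) 2

lemma eq_zero_of_apply_zero_of_signedNormSq_nonpos {f : Fin (n + 1) → ℂ} (h0 : f 0 = 0)
    (hf : signedNormSq f ≤ 0) : f = 0 := by
  rw [signedNormSq, h0, norm_zero, zero_pow two_ne_zero, neg_zero, zero_add] at hf
  have hsucc := (Finset.sum_eq_zero_iff_of_nonneg fun j _ => by positivity).mp
    (hf.antisymm (Finset.sum_nonneg fun j _ => by positivity))
  funext i
  refine Fin.cases h0 (fun j => ?_) i
  simpa using hsucc j (Finset.mem_univ j)

lemma smul_eq_smul_of_indefForm_eq_zero {f g : Fin (n + 1) → ℂ} (hfg : indefForm n f g = 0)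
    (hgf : indefForm n g f = 0) (hf : signedNormSq f ≤ 0) (hg : signedNormSq g ≤ 0) :
    g 0 • f = f 0 • g := by
  set h := g 0 • f - f 0 • g
  have hB : indefForm n h h =
      g 0 * conj (g 0) * indefForm n f f + f 0 * conj (f 0) * indefForm n g g := by
    simp only [h, map_sub, map_smul, map_smulₛₗ, LinearMap.sub_apply, LinearMap.smul_apply,
      hfg, hgf, smul_eq_mul]
    ring
  have hh : signedNormSq h = ‖g 0‖ ^ 2 * signedNormSq f + ‖f 0‖ ^ 2 * signedNormSq g := by
    rw [indefForm_self, indefForm_self, indefForm_self, Complex.mul_conj', Complex.mul_conj'] at hB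
    exact_mod_cast hB
  have hh0 : h 0 = 0 := by simp [h, mul_comm]
  rw [← sub_eq_zero]
  refine eq_zero_of_apply_zero_of_signedNormSq_nonpos hh0 ?_
  rw [hh]
  nlinarith [sq_nonneg ‖g 0‖, sq_nonneg ‖f 0‖]

lemma isSelfAdjoint_indefForm_toLin' {A : Matrix (Fin (n + 1)) (Fin (n + 1)) ℂ}
    (hA : (diagonal indefSign * A).IsHermitian) : (indefForm n).IsSelfAdjoint (toLin' A) := by
  intro f g
  have hA' (i j) : indefSign i * A i j = indefSign j * star (A j i) := by
    simpa [diagonal_mul, star_indefSign] using (hA.apply i j).symm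
  simp only [indefForm_apply, toLin'_apply, mulVec, dotProduct, star_sum, star_mul',
    Finset.mul_sum, Finset.sum_mul]
  rw [Finset.sum_comm]
  refine Finset.sum_congr rfl fun i _ => Finset.sum_congr rfl fun j _ => ?_
  linear_combination f i * star (g j) * hA' j i

variable {T : Module.End ℂ (Fin (n + 1) → ℂ)}

lemma indefForm_eigenvector (hT : (indefForm n).IsSelfAdjoint T) {f g : Fin (n + 1) → ℂ}
    {μ ν : ℂ} (hf : T f = μ • f) (hg : T g = ν • g) :
    (μ - conj ν) * indefForm n f g = 0 := by
  have h := hT f g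
  rw [hf, hg, map_smul, LinearMap.smul_apply, map_smulₛₗ] at h
  simp only [smul_eq_mul] at h
  linear_combination h

lemma indefForm_eq_zero_of_eigenvector (hT : (indefForm n).IsSelfAdjoint T)
    {f g : Fin (n + 1) → ℂ} {μ ν : ℂ} (hf : T f = μ • f) (hg : T g = ν • g) (hν : ν.im = 0)
    (hμν : μ ≠ ν) : indefForm n f g = 0 := by
  have h := indefForm_eigenvector hT hf hg
  rw [Complex.conj_eq_iff_im.mpr hν] at h
  exact (mul_eq_zero.mp h).resolve_left (sub_ne_zero.mpr hμν)

lemma signedNormSq_eq_zero_of_im_ne_zero (hT : (indefForm n).IsSelfAdjoint T)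
    {f : Fin (n + 1) → ℂ} {μ : ℂ} (hf : T f = μ • f) (hμ : μ.im ≠ 0) : signedNormSq f = 0 := by
  have hμ' : μ - conj μ ≠ 0 := by
    rw [sub_ne_zero]
    intro h
    have := congrArg Complex.im h
    simp only [conj_im] at this
    exact hμ (by linarith)
  have := (mul_eq_zero.mp (indefForm_eigenvector hT hf hf)).resolve_left hμ'
  exact_mod_cast (indefForm_self f).symm.trans this

lemma exists_eigenvector_conj (hT : (indefForm n).IsSelfAdjoint T) {v : Fin (n + 1) → ℂ}
    {μ : ℂ} (hv : v ≠ 0) (hμ : T v = μ • v) : ∃ w ≠ 0, T w = conj μ • w := by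
  set S := T - conj μ • 1
  -- the range of `S` is orthogonal to `v`, so `S` is not surjective
  have hS f : indefForm n (S f) v = 0 := by
    rw [LinearMap.sub_apply, LinearMap.smul_apply, Module.End.one_apply, map_sub, map_smul,
      LinearMap.sub_apply, LinearMap.smul_apply, hT, hμ, map_smulₛₗ, smul_eq_mul, sub_self]
  have hSsurj : ¬ Function.Surjective S := fun hsurj => by
    obtain ⟨f, hf⟩ := hsurj fun i => indefSign i * v i
    exact indefForm_nondegenerate hv (hf ▸ hS f)
  obtain ⟨w, hw, hSw⟩ : ∃ w, w ≠ 0 ∧ S w = 0 := by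
    by_contra! h
    exact hSsurj (LinearMap.injective_iff_surjective.mp
      ((injective_iff_map_eq_zero S).mpr fun w hw => by_contra fun hne => h w hne hw))
  refine ⟨w, hw, ?_⟩
  simpa [S, sub_eq_zero] using hSw

lemma signedNormSq_eq_zero_of_eq_sub_smul (hT : (indefForm n).IsSelfAdjoint T)
    {v y : Fin (n + 1) → ℂ} {μ : ℂ} (hμ : μ.im = 0) (hv : T v = μ • v) (hy : v = T y - μ • y) :
    signedNormSq v = 0 := by
  have h : indefForm n v v = 0 := by
    nth_rewrite 1 [hy]
    rw [map_sub, LinearMap.sub_apply, hT, hv, map_smulₛₗ, map_smul, LinearMap.smul_apply,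
      Complex.conj_eq_iff_im.mpr hμ, sub_self]
  exact_mod_cast (indefForm_self v).symm.trans h

lemma apply_eq_smul_of_mem_maxGenEigenspace (hT : (indefForm n).IsSelfAdjoint T) {μ : ℂ}
    (hpos : ∀ v ≠ 0, T v = μ • v → μ.im = 0 ∧ 0 < signedNormSq v)
    {x : Fin (n + 1) → ℂ} (hx : x ∈ T.maxGenEigenspace μ) : T x = μ • x := by
  rw [← sub_eq_zero]
  obtain ⟨k, hk⟩ := (Module.End.mem_maxGenEigenspace T μ x).mp hx
  clear hx
  induction k generalizing x with
  | zero => simp_all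
  | succ k ih =>
    set v := T x - μ • x
    have hv : T v = μ • v := by
      have := ih (x := v) (by
        rwa [pow_succ, Module.End.mul_apply, LinearMap.sub_apply, LinearMap.smul_apply,
          Module.End.one_apply] at hk)
      rwa [sub_eq_zero] at this
    by_contra hv0
    obtain ⟨hμ, hvpos⟩ := hpos v hv0 hv
    exact hvpos.ne' (signedNormSq_eq_zero_of_eq_sub_smul hT hμ hv rfl)

lemma signedNormSq_nonneg_of_forall_eigenvector (hT : (indefForm n).IsSelfAdjoint T)
    (hpos : ∀ μ : ℂ, ∀ v ≠ 0, T v = μ • v → μ.im = 0 ∧ 0 < signedNormSq v)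
    (x : Fin (n + 1) → ℂ) : 0 ≤ signedNormSq x := by
  have hx : x ∈ ⨆ μ, T.maxGenEigenspace μ := by
    rw [Module.End.iSup_maxGenEigenspace_eq_top]; trivial
  obtain ⟨c, hc, rfl⟩ := (Submodule.mem_iSup_iff_exists_finsupp _ x).mp hx
  have hcT μ : T (c μ) = μ • c μ := apply_eq_smul_of_mem_maxGenEigenspace hT (hpos μ) (hc μ)
  have horth μ ν (hμν : μ ≠ ν) : indefForm n (c μ) (c ν) = 0 := by
    by_cases hν : c ν = 0
    · rw [hν, map_zero]
    · exact indefForm_eq_zero_of_eigenvector hT (hcT μ) (hcT ν) (hpos ν _ hν (hcT ν)).1 hμν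
  have hsum : indefForm n (c.sum fun _ v => v) (c.sum fun _ v => v) =
      ((∑ μ ∈ c.support, signedNormSq (c μ) : ℝ) : ℂ) := by
    simp only [Finsupp.sum, map_sum, LinearMap.sum_apply]
    push_cast
    refine Finset.sum_congr rfl fun μ hμ => ?_
    rw [Finset.sum_eq_single_of_mem μ hμ fun ν _ hνμ => horth ν μ hνμ, indefForm_self]
  rw [Complex.ofReal_injective ((indefForm_self _).symm.trans hsum)]
  refine Finset.sum_nonneg fun μ _ => ?_
  by_cases h0 : c μ = 0
  · simp [h0, signedNormSq]
  · exact (hpos μ _ h0 (hcT μ)).2.le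

lemma exists_eigenvector_signedNormSq_nonpos (hT : (indefForm n).IsSelfAdjoint T) :
    ∃ μ : ℂ, 0 ≤ μ.im ∧ ∃ f, f ≠ 0 ∧ T f = μ • f ∧ signedNormSq f ≤ 0 := by
  by_contra! hno
  have hreal (μ : ℂ) (v : Fin (n + 1) → ℂ) (hv : v ≠ 0) (hμ : T v = μ • v) : μ.im = 0 := by
    rcases lt_trichotomy μ.im 0 with hneg | hzero | hpos
    · obtain ⟨w, hw, hwT⟩ := exists_eigenvector_conj hT hv hμ
      have := hno (conj μ) (by simp [hneg.le]) w hw hwT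
      rw [signedNormSq_eq_zero_of_im_ne_zero hT hwT (by simp [hneg.ne])] at this
      exact absurd this (lt_irrefl 0)
    · exact hzero
    · have := hno μ hpos.le v hv hμ
      rw [signedNormSq_eq_zero_of_im_ne_zero hT hμ hpos.ne'] at this
      exact absurd this (lt_irrefl 0)
  have hnonneg := signedNormSq_nonneg_of_forall_eigenvector hT
    (fun μ v hv hμ => ⟨hreal μ v hv hμ, hno μ (hreal μ v hv hμ).ge v hv hμ⟩) (Pi.single 0 1)
  norm_num [signedNormSq] at hnonneg

lemma eq_of_eigenvector_signedNormSq_nonpos (hT : (indefForm n).IsSelfAdjoint T)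
    {μ ν : ℂ} {f g : Fin (n + 1) → ℂ} (hμ : 0 ≤ μ.im) (hν : 0 ≤ ν.im)
    (hf : f ≠ 0) (hfT : T f = μ • f) (hfneg : signedNormSq f ≤ 0)
    (hg : g ≠ 0) (hgT : T g = ν • g) (hgneg : signedNormSq g ≤ 0) : μ = ν := by
  by_cases hc : μ = conj ν
  · have him := congrArg Complex.im hc
    have hre := congrArg Complex.re hc
    simp only [conj_im, conj_re] at him hre
    exact Complex.ext hre (by linarith)
  have hc' : ν ≠ conj μ := fun h => hc (by rw [h, conj_conj])
  have hfg := (mul_eq_zero.mp (indefForm_eigenvector hT hfT hgT)).resolve_left (sub_ne_zero.mpr hc)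
  have hgf := (mul_eq_zero.mp (indefForm_eigenvector hT hgT hfT)).resolve_left (sub_ne_zero.mpr hc')
  have hprop := smul_eq_smul_of_indefForm_eq_zero hfg hgf hfneg hgneg
  have hg0 : g 0 ≠ 0 := fun h0 => hg (eq_zero_of_apply_zero_of_signedNormSq_nonpos h0 hgneg)
  refine smul_left_injective ℂ (smul_ne_zero hg0 hf) ?_
  calc μ • g 0 • f = T (g 0 • f) := by rw [map_smul, hfT, smul_comm]
    _ = T (f 0 • g) := by rw [hprop]
    _ = ν • g 0 • f := by rw [map_smul, hgT, smul_comm, hprop]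

end IndefiniteForm

lemma isHermitian_diagonal_indefSign_mul_jacobiH0 (a b : ℕ → ℝ) (n : ℕ) :
    (diagonal indefSign * JacobiH0 a b n).IsHermitian := by
  refine Matrix.IsHermitian.ext fun ⟨i, hi⟩ ⟨j, hj⟩ => ?_
  simp only [diagonal_mul, indefSign, JacobiH0, of_apply, Fin.ext_iff, Fin.val_zero]
  split_ifs <;> first | omega | (subst_vars; simp)

theorem stmt_15_general (a b : ℕ → ℝ) (n : ℕ) :
    ∃! lam : ℂ, 0 ≤ lam.im ∧ ∃ f : Fin (n + 1) → ℂ, f ≠ 0 ∧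
      (JacobiH0 a b n).mulVec f = lam • f ∧
      -‖f 0‖ ^ 2 + ∑ j : Fin n, ‖f j.succ‖ ^ 2 ≤ 0 := by
  have hT := isSelfAdjoint_indefForm_toLin' (isHermitian_diagonal_indefSign_mul_jacobiH0 a b n)
  obtain ⟨μ, hμ, f, hf, hfT, hfneg⟩ := exists_eigenvector_signedNormSq_nonpos hT
  refine ⟨μ, ⟨hμ, f, hf, hfT, hfneg⟩, fun ν ⟨hν, g, hg, hgT, hgneg⟩ => ?_⟩
  exact eq_of_eigenvector_signedNormSq_nonpos hT hν hμ hg hgT hgneg hf hfT hfneg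

/-- Existence and uniqueness of the eigenvalue of nonpositive type of a truncation. -/
theorem stmt_15 (a b : ℕ → ℝ) (hb : ∀ j, 0 < b j) (n : ℕ) (hn : 1 ≤ n) :
    ∃! lam : ℂ, 0 ≤ lam.im ∧ ∃ f : Fin (n + 1) → ℂ, f ≠ 0 ∧
      (JacobiH0 a b n).mulVec f = lam • f ∧
      -‖f 0‖ ^ 2 + ∑ j : Fin n, ‖f j.succ‖ ^ 2 ≤ 0 :=
  stmt_15_general a b n
end

section
/- Neutrality of eigenvectors at non-real eigenvalues: for every n ≥ 1, if λ ∈ ℂ with Im λ ≠ 0 and f ∈ ℂ^{n+1} satisfies H_{[0,n]} f = λ f, then −|f_0|² + Σ_{j=1}^{n} |f_j|² = 0. -/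
open MeasureTheory Complex Filter

/-!
With `J = diag(-1, 1, …, 1)`, the matrix `J * H_{[0,n]}` is real symmetric, i.e. `H_{[0,n]}` is
self-adjoint for the indefinite form `[f, g] = g* J f`. For an eigenvector `f` with eigenvalue `λ`
both `[H f, f] = λ [f, f]` and `[f, f]` are real, so `Im λ ≠ 0` forces `[f, f] = 0`, which is the
claimed identity.
-/

namespace Matrix

variable {𝕜 ι : Type*} [RCLike 𝕜] [Fintype ι]

theorem star_dotProduct_mulVec_eq_zero_of_mulVec_eq_smul {J H : Matrix ι ι 𝕜}
    (hJ : J.IsHermitian) (hJH : (J * H).IsHermitian) {lam : 𝕜} (hlam : RCLike.im lam ≠ 0)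
    {f : ι → 𝕜} (hf : H *ᵥ f = lam • f) : star f ⬝ᵥ J *ᵥ f = 0 := by
  set q := star f ⬝ᵥ J *ᵥ f
  have hq : RCLike.im q = 0 := hJ.im_star_dotProduct_mulVec_self f
  have hlamq : star f ⬝ᵥ (J * H) *ᵥ f = lam * q := by
    rw [← mulVec_mulVec, hf, mulVec_smul, dotProduct_smul, smul_eq_mul]
  have h : RCLike.im lam * RCLike.re q = 0 := by
    simpa [hlamq, hq] using hJH.im_star_dotProduct_mulVec_self f
  exact RCLike.ext (by simpa [hlam] using h) (by simpa using hq)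

end Matrix

open Matrix

def jacobiSign (n : ℕ) : Matrix (Fin (n + 1)) (Fin (n + 1)) ℂ :=
  diagonal fun i => if i = 0 then -1 else 1

theorem isHermitian_jacobiSign (n : ℕ) : (jacobiSign n).IsHermitian := by
  refine isHermitian_diagonal_iff.mpr fun i => ?_
  split_ifs <;> simp [IsSelfAdjoint]

theorem isHermitian_jacobiSign_mul_jacobiH0 (a b : ℕ → ℝ) (n : ℕ) :
    (jacobiSign n * JacobiH0 a b n).IsHermitian := by
  refine IsHermitian.ext fun ⟨i, hi⟩ ⟨j, hj⟩ => ?_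
  simp only [jacobiSign, diagonal_mul, JacobiH0, of_apply, Fin.ext_iff, Fin.val_zero]
  split_ifs <;> subst_vars <;> simp <;> omega

theorem star_dotProduct_jacobiSign_mulVec (n : ℕ) (f : Fin (n + 1) → ℂ) :
    star f ⬝ᵥ jacobiSign n *ᵥ f = ((-‖f 0‖ ^ 2 + ∑ j : Fin n, ‖f j.succ‖ ^ 2 : ℝ) : ℂ) := by
  simp [jacobiSign, dotProduct, mulVec_diagonal, Fin.sum_univ_succ, RCLike.star_def,
    RCLike.conj_mul]

theorem stmt_16_general (a b : ℕ → ℝ) (n : ℕ)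
    (lam : ℂ) (hlam : lam.im ≠ 0) (f : Fin (n + 1) → ℂ)
    (hf : (JacobiH0 a b n).mulVec f = lam • f) :
    -‖f 0‖ ^ 2 + ∑ j : Fin n, ‖f j.succ‖ ^ 2 = 0 := by
  have hneutral := star_dotProduct_mulVec_eq_zero_of_mulVec_eq_smul (isHermitian_jacobiSign n)
    (isHermitian_jacobiSign_mul_jacobiH0 a b n) hlam hf
  rwa [star_dotProduct_jacobiSign_mulVec, Complex.ofReal_eq_zero] at hneutral

/-- Neutrality of eigenvectors at non-real eigenvalues. -/
theorem stmt_16 (a b : ℕ → ℝ) (hb : ∀ j, 0 < b j) (n : ℕ) (hn : 1 ≤ n)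
    (lam : ℂ) (hlam : lam.im ≠ 0) (f : Fin (n + 1) → ℂ)
    (hf : (JacobiH0 a b n).mulVec f = lam • f) :
    -‖f 0‖ ^ 2 + ∑ j : Fin n, ‖f j.succ‖ ^ 2 = 0 :=
  stmt_16_general a b n lam hlam f hf
end
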